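/- arXiv:1504.07234 — 5 statements merged into one kernel-verified Lean document; each statement's English description precedes it below -/
import Mathlib

section
/- Let K be a real m×s matrix with m < s, let g ∈ ℝ^m, let μ > 0, and let 0 < λ < 1/‖KᵀK‖ (spectral norm). Define sequences by z⁰ = x⁰ = 0 and, for n ≥ 0, z^{n+1} = z^n + Kᵀ(g − K x^n), x^{n+1} = λ·S_μ(z^{n+1}). Then the sequence (x^n) converges to the unique solution of the problem: minimize μ‖x‖₁ + (1/(2λ))‖x‖² over the set of minimizers of ‖Kx − g‖² in ℝ^s. -/
open Matrix Filter

/-- Soft-thresholding operator acting componentwise: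
`S_μ(u)_i = sgn(u_i) · max(|u_i| − μ, 0)`. -/
noncomputable def soft {s : ℕ} (μ : ℝ) (u : EuclideanSpace ℝ (Fin s)) : EuclideanSpace ℝ (Fin s) :=
  WithLp.toLp 2 (fun i => Real.sign (u i) * max (|u i| - μ) 0)

/-- Matrix-vector multiplication as a map between Euclidean spaces. -/
noncomputable def mulVecE {m n : ℕ} (A : Matrix (Fin m) (Fin n) ℝ)
    (v : EuclideanSpace ℝ (Fin n)) : EuclideanSpace ℝ (Fin m) :=
  WithLp.toLp 2 (A.mulVec v)

/-- The spectral norm of a real matrix: the operator norm induced by Euclidean vector norms. -/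
noncomputable def specNorm {m n : ℕ} (A : Matrix (Fin m) (Fin n) ℝ) : ℝ :=
  ‖(Matrix.toEuclideanLin A).toContinuousLinearMap‖

/-- The ℓ¹-norm of a vector. -/
noncomputable def l1norm {s : ℕ} (u : EuclideanSpace ℝ (Fin s)) : ℝ := ∑ i, |u i|

/-!
Write `A` for the linear map of `K`, `S` for `S_μ`, and `b` for the orthogonal projection of `g`
onto `range A`, so that `A† g = A† b`. With `z = A† q` the iteration becomes the dual iteration
`q ↦ T q := q + (b - λ A S (A† q))`, `x = λ S (A† q)`. As `S` is firmly nonexpansive and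
`λ‖A‖² ≤ 1`, every fixed point `p` of `T` satisfies `‖T q - p‖² + ‖T q - q‖² ≤ ‖q - p‖²`, and in
finite dimension this Fejér inequality makes the iterates converge to a fixed point as soon as
one exists. Fixed points are the critical points of the concave dual function
`p ↦ ⟪p, b⟫ - λ‖S (A† p)‖²/2`, which is coercive on `range A` and so attains its maximum there.
At a fixed point `q` the limit `x* = λ S (A† q)` satisfies `A x* = b`, so it is a least-squares
solution, and `A† q` is a subgradient of the `1/λ`-strongly convex `μ‖·‖₁ + ‖·‖²/(2λ)` at `x*`;
hence `x*` is its unique minimizer on `{y | A y = b}`.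
-/

open Filter Topology Function ContinuousLinearMap
open scoped InnerProductSpace

noncomputable def softThreshold (μ t : ℝ) : ℝ := Real.sign t * max (|t| - μ) 0

lemma softThreshold_zero (μ : ℝ) : softThreshold μ 0 = 0 := by simp [softThreshold]

section SoftThreshold

variable {μ : ℝ}

lemma softThreshold_cases (hμ : 0 ≤ μ) (t : ℝ) :
    (μ < t ∧ softThreshold μ t = t - μ) ∨ (t < -μ ∧ softThreshold μ t = t + μ) ∨
      (-μ ≤ t ∧ t ≤ μ ∧ softThreshold μ t = 0) := by
  unfold softThreshold
  rcases lt_or_ge μ t with h | h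
  · left
    rw [Real.sign_of_pos (by linarith), abs_of_pos (by linarith), max_eq_left (by linarith)]
    exact ⟨h, one_mul _⟩
  rcases lt_or_ge t (-μ) with h' | h'
  · right; left
    rw [Real.sign_of_neg (by linarith), abs_of_neg (by linarith), max_eq_left (by linarith)]
    exact ⟨h', by ring⟩
  · right; right
    rw [max_eq_right (by linarith [abs_le.2 ⟨h', h⟩])]
    exact ⟨h', h, mul_zero _⟩

lemma softThreshold_sub_sq_le_mul_sub (hμ : 0 ≤ μ) (a b : ℝ) :
    (softThreshold μ a - softThreshold μ b) ^ 2 ≤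
      (softThreshold μ a - softThreshold μ b) * (a - b) := by
  rcases softThreshold_cases hμ a with ⟨_, ea⟩ | ⟨_, ea⟩ | ⟨_, _, ea⟩ <;>
    rcases softThreshold_cases hμ b with ⟨_, eb⟩ | ⟨_, eb⟩ | ⟨_, _, eb⟩ <;>
    rw [ea, eb] <;> nlinarith

lemma softThreshold_sq_le_add (hμ : 0 ≤ μ) (a b : ℝ) :
    softThreshold μ b ^ 2 ≤
      softThreshold μ a ^ 2 + 2 * softThreshold μ a * (b - a) + (b - a) ^ 2 := by
  rcases softThreshold_cases hμ a with ⟨_, ea⟩ | ⟨_, ea⟩ | ⟨_, _, ea⟩ <;>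
    rcases softThreshold_cases hμ b with ⟨_, eb⟩ | ⟨_, eb⟩ | ⟨_, _, eb⟩ <;>
    rw [ea, eb] <;> nlinarith

lemma sq_le_two_mul_softThreshold_sq (hμ : 0 ≤ μ) (t : ℝ) :
    t ^ 2 ≤ 2 * softThreshold μ t ^ 2 + 2 * μ ^ 2 := by
  rcases softThreshold_cases hμ t with ⟨_, e⟩ | ⟨_, e⟩ | ⟨_, _, e⟩ <;> rw [e] <;>
    nlinarith [sq_nonneg (t - 2 * μ), sq_nonneg (t + 2 * μ)]

lemma sub_softThreshold_mul_add_le (hμ : 0 ≤ μ) {c : ℝ} (hc : 0 ≤ c) (t y : ℝ) :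
    (t - softThreshold μ t) * (y - c * softThreshold μ t) + μ * |c * softThreshold μ t| ≤
      μ * |y| := by
  rcases softThreshold_cases hμ t with ⟨h, e⟩ | ⟨h, e⟩ | ⟨h, h', e⟩ <;> rw [e]
  · rw [abs_of_nonneg (by nlinarith)]; nlinarith [le_abs_self y]
  · rw [abs_of_nonpos (by nlinarith)]; nlinarith [neg_abs_le y]
  · rw [mul_zero, abs_zero, mul_zero, add_zero, sub_zero, sub_zero]
    calc t * y ≤ |t| * |y| := by rw [← abs_mul]; exact le_abs_self _
      _ ≤ μ * |y| := mul_le_mul_of_nonneg_right (abs_le.2 ⟨h, h'⟩) (abs_nonneg y)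

end SoftThreshold

lemma lipschitzWith_one_of_norm_sub_sq_le_inner {E : Type*} [NormedAddCommGroup E]
    [InnerProductSpace ℝ E] {S : E → E}
    (hS : ∀ u v, ‖S u - S v‖ ^ 2 ≤ ⟪S u - S v, u - v⟫_ℝ) : LipschitzWith 1 S :=
  LipschitzWith.of_dist_le_mul fun u v => by
    rw [NNReal.coe_one, one_mul, dist_eq_norm, dist_eq_norm]
    have h := (hS u v).trans (real_inner_le_norm _ _)
    nlinarith [norm_nonneg (S u - S v), norm_nonneg (u - v)]

lemma EuclideanSpace.real_inner_eq_sum {ι : Type*} [Fintype ι] (x y : EuclideanSpace ℝ ι) :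
    ⟪x, y⟫_ℝ = ∑ i, x i * y i := by
  simp [PiLp.inner_apply, mul_comm]

lemma EuclideanSpace.real_norm_sq_eq_sum {ι : Type*} [Fintype ι] (x : EuclideanSpace ℝ ι) :
    ‖x‖ ^ 2 = ∑ i, x i ^ 2 := by
  simp [EuclideanSpace.norm_sq_eq]

section Soft

variable {s : ℕ} {μ : ℝ}

lemma soft_apply (u : EuclideanSpace ℝ (Fin s)) (i : Fin s) :
    soft μ u i = softThreshold μ (u i) := rfl

lemma soft_zero : soft μ (0 : EuclideanSpace ℝ (Fin s)) = 0 := by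
  ext i; exact softThreshold_zero μ

lemma norm_soft_sub_soft_sq_le_inner (hμ : 0 ≤ μ) (u v : EuclideanSpace ℝ (Fin s)) :
    ‖soft μ u - soft μ v‖ ^ 2 ≤ ⟪soft μ u - soft μ v, u - v⟫_ℝ := by
  rw [EuclideanSpace.real_norm_sq_eq_sum, EuclideanSpace.real_inner_eq_sum]
  exact Finset.sum_le_sum fun i _ => softThreshold_sub_sq_le_mul_sub hμ (u i) (v i)

lemma norm_soft_sq_le_add (hμ : 0 ≤ μ) (a b : EuclideanSpace ℝ (Fin s)) :
    ‖soft μ b‖ ^ 2 ≤ ‖soft μ a‖ ^ 2 + 2 * ⟪soft μ a, b - a⟫_ℝ + ‖b - a‖ ^ 2 := by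
  simp only [EuclideanSpace.real_norm_sq_eq_sum, EuclideanSpace.real_inner_eq_sum,
    Finset.mul_sum, ← Finset.sum_add_distrib, PiLp.sub_apply, soft_apply, ← mul_assoc]
  exact Finset.sum_le_sum fun i _ => softThreshold_sq_le_add hμ (a i) (b i)

lemma norm_sq_le_two_mul_norm_soft_sq (hμ : 0 ≤ μ) (u : EuclideanSpace ℝ (Fin s)) :
    ‖u‖ ^ 2 ≤ 2 * ‖soft μ u‖ ^ 2 + 2 * s * μ ^ 2 := by
  have h : ∑ i, u i ^ 2 ≤ ∑ i : Fin s, (2 * softThreshold μ (u i) ^ 2 + 2 * μ ^ 2) :=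
    Finset.sum_le_sum fun i _ => sq_le_two_mul_softThreshold_sq hμ (u i)
  simp only [Finset.sum_add_distrib, ← Finset.mul_sum, Finset.sum_const, Finset.card_univ,
    Fintype.card_fin, nsmul_eq_mul] at h
  simp only [EuclideanSpace.real_norm_sq_eq_sum, soft_apply]
  linarith

lemma inner_sub_soft_add_le (hμ : 0 ≤ μ) {c : ℝ} (hc : 0 ≤ c) (u y : EuclideanSpace ℝ (Fin s)) :
    ⟪u - soft μ u, y - c • soft μ u⟫_ℝ + μ * l1norm (c • soft μ u) ≤ μ * l1norm y := by
  simp only [EuclideanSpace.real_inner_eq_sum, l1norm, Finset.mul_sum, ← Finset.sum_add_distrib]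
  exact Finset.sum_le_sum fun i _ => sub_softThreshold_mul_add_le hμ hc (u i) (y i)

lemma continuous_soft (hμ : 0 ≤ μ) : Continuous (soft μ : EuclideanSpace ℝ (Fin s) → _) :=
  (lipschitzWith_one_of_norm_sub_sq_le_inner (norm_soft_sub_soft_sq_le_inner hμ)).continuous

end Soft

section Fejer

variable {X : Type*} [MetricSpace X] {F : X → X}

lemma antitone_dist_iterate
    (hF : ∀ p, IsFixedPt F p → ∀ x, dist (F x) p ^ 2 + dist (F x) x ^ 2 ≤ dist x p ^ 2)
    {p : X} (hp : IsFixedPt F p) (x₀ : X) : Antitone (fun n => dist (F^[n] x₀) p) := by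
  refine antitone_nat_of_succ_le fun n => ?_
  rw [iterate_succ_apply']
  have h := hF p hp (F^[n] x₀)
  exact (pow_le_pow_iff_left₀ dist_nonneg dist_nonneg two_ne_zero).1
    (by nlinarith [sq_nonneg (dist (F (F^[n] x₀)) (F^[n] x₀))])

lemma tendsto_dist_iterate
    (hF : ∀ p, IsFixedPt F p → ∀ x, dist (F x) p ^ 2 + dist (F x) x ^ 2 ≤ dist x p ^ 2)
    {p : X} (hp : IsFixedPt F p) (x₀ : X) :
    Tendsto (fun n => dist (F^[n] x₀) p) atTop (𝓝 (⨅ n, dist (F^[n] x₀) p)) :=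
  tendsto_atTop_ciInf (antitone_dist_iterate hF hp x₀) ⟨0, by rintro _ ⟨n, rfl⟩; exact dist_nonneg⟩

theorem exists_isFixedPt_tendsto_iterate [ProperSpace X] (hFc : Continuous F)
    (hF : ∀ p, IsFixedPt F p → ∀ x, dist (F x) p ^ 2 + dist (F x) x ^ 2 ≤ dist x p ^ 2)
    {p₀ : X} (hp₀ : IsFixedPt F p₀) (x₀ : X) :
    ∃ p, IsFixedPt F p ∧ Tendsto (fun n => F^[n] x₀) atTop (𝓝 p) := by
  set q : ℕ → X := fun n => F^[n] x₀
  have hlim₀ := tendsto_dist_iterate hF hp₀ x₀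
  obtain ⟨p, -, φ, hφ, hqφ⟩ := tendsto_subseq_of_bounded (x := q) Metric.isBounded_closedBall
    fun n => Metric.mem_closedBall.2 (antitone_dist_iterate hF hp₀ x₀ (Nat.zero_le n))
  -- `dist (F p) p ^ 2` is squeezed by the difference of two sequences with the same limit
  have hdiff :
      Tendsto (fun k => dist (q (φ k)) p₀ ^ 2 - dist (q (φ k + 1)) p₀ ^ 2) atTop (𝓝 0) := by
    have h := ((hlim₀.comp hφ.tendsto_atTop).pow 2).sub
      ((hlim₀.comp ((tendsto_add_atTop_nat 1).comp hφ.tendsto_atTop)).pow 2)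
    rw [sub_self] at h
    exact h
  have hstep :
      Tendsto (fun k => dist (F (q (φ k))) (q (φ k)) ^ 2) atTop (𝓝 (dist (F p) p ^ 2)) :=
    (((hFc.tendsto p).comp hqφ).dist hqφ).pow 2
  have hsq : dist (F p) p ^ 2 ≤ 0 := le_of_tendsto_of_tendsto' hstep hdiff fun k => by
    have h := hF p₀ hp₀ (q (φ k))
    rw [← iterate_succ_apply' F] at h ⊢
    linarith
  have hfix : IsFixedPt F p :=
    dist_le_zero.1 (pow_eq_zero_iff two_ne_zero |>.1 (le_antisymm hsq (sq_nonneg _))).le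
  have hlim := tendsto_dist_iterate hF hfix x₀
  have hinf : (⨅ n, dist (q n) p) = 0 :=
    tendsto_nhds_unique (hlim.comp hφ.tendsto_atTop) (tendsto_iff_dist_tendsto_zero.1 hqφ)
  exact ⟨p, hfix, tendsto_iff_dist_tendsto_zero.2 (hinf ▸ hlim)⟩

end Fejer

theorem exists_forall_le_of_le_neg_sq {V : Type*} [NormedAddCommGroup V] [ProperSpace V]
    {f : V → ℝ} (hf : Continuous f) {a b c : ℝ} (ha : 0 < a)
    (hle : ∀ v, f v ≤ -a * ‖v‖ ^ 2 + b * ‖v‖ + c) : ∃ v, ∀ w, f w ≤ f v := by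
  have hquad : Tendsto (fun r : ℝ => -a * r ^ 2 + b * r + c) atTop atBot := by
    have h : Tendsto (fun r : ℝ => r * (a * r - b)) atTop atTop :=
      tendsto_id.atTop_mul_atTop₀
        (tendsto_atTop_add_const_right _ (-b) (tendsto_id.const_mul_atTop ha))
    refine (tendsto_atBot_add_const_right _ c (tendsto_neg_atTop_atBot.comp h)).congr fun r => ?_
    simp only [Function.comp_apply]; ring
  exact hf.exists_forall_ge (tendsto_atBot_mono hle (hquad.comp tendsto_norm_cocompact_atTop))

section BregmanStep

variable {E F : Type*} [NormedAddCommGroup E] [InnerProductSpace ℝ E] [CompleteSpace E]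
  [NormedAddCommGroup F] [InnerProductSpace ℝ F] [CompleteSpace F]

/-- The linearized Bregman iteration in the dual variable `q`: the paper's iterates are
`z = A† q` and `x = λ S (A† q)`. -/
noncomputable def bregmanStep (A : E →L[ℝ] F) (S : E → E) (lam : ℝ) (b q : F) : F :=
  q + (b - lam • A (S (adjoint A q)))

lemma isFixedPt_bregmanStep_iff {A : E →L[ℝ] F} {S : E → E} {lam : ℝ} {b q : F} :
    IsFixedPt (bregmanStep A S lam b) q ↔ lam • A (S (adjoint A q)) = b := by
  rw [IsFixedPt, bregmanStep, add_eq_left, sub_eq_zero, eq_comm]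

lemma continuous_bregmanStep (A : E →L[ℝ] F) {S : E → E} (hS : Continuous S) (lam : ℝ) (b : F) :
    Continuous (bregmanStep A S lam b) :=
  continuous_id.add (continuous_const.sub
    ((A.continuous.comp (hS.comp (adjoint A).continuous)).const_smul lam))

lemma dist_bregmanStep_sq_add_le (A : E →L[ℝ] F) {S : E → E}
    (hS : ∀ u v, ‖S u - S v‖ ^ 2 ≤ ⟪S u - S v, u - v⟫_ℝ) {lam : ℝ} (hlam0 : 0 ≤ lam)
    (hlam : lam * ‖A‖ ^ 2 ≤ 1) {b p : F} (hp : IsFixedPt (bregmanStep A S lam b) p) (q : F) :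
    dist (bregmanStep A S lam b q) p ^ 2 + dist (bregmanStep A S lam b q) q ^ 2 ≤
      dist q p ^ 2 := by
  rw [isFixedPt_bregmanStep_iff] at hp
  set Δ := S (adjoint A q) - S (adjoint A p)
  have hstep : bregmanStep A S lam b q - q = -(lam • A Δ) := by
    rw [bregmanStep, ← hp, map_sub, smul_sub]; abel
  have hinner : ‖Δ‖ ^ 2 ≤ ⟪q - p, A Δ⟫_ℝ := by
    rw [← adjoint_inner_left, map_sub, real_inner_comm]; exact hS _ _
  have hA : ‖A Δ‖ ^ 2 ≤ ‖A‖ ^ 2 * ‖Δ‖ ^ 2 := by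
    rw [← mul_pow]; exact pow_le_pow_left₀ (norm_nonneg _) (A.le_opNorm Δ) 2
  have hexpand : bregmanStep A S lam b q - p = (q - p) - lam • A Δ := by
    rw [← sub_add_sub_cancel _ q, hstep]; abel
  rw [dist_eq_norm, dist_eq_norm, dist_eq_norm, hexpand, hstep, norm_neg, norm_sub_sq_real,
    real_inner_smul_right, norm_smul, Real.norm_of_nonneg hlam0]
  nlinarith [mul_le_mul_of_nonneg_left hA (sq_nonneg lam), mul_nonneg hlam0 (sq_nonneg ‖Δ‖)]

end BregmanStep

section Range

variable {E F : Type*} [NormedAddCommGroup E] [InnerProductSpace ℝ E] [CompleteSpace E]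
  [NormedAddCommGroup F] [InnerProductSpace ℝ F] [CompleteSpace F]

lemma adjoint_apply_eq_zero_iff_mem_orthogonal_range (A : E →L[ℝ] F) (v : F) :
    adjoint A v = 0 ↔ v ∈ A.rangeᗮ := by
  rw [orthogonal_range, LinearMap.mem_ker, coe_coe]

lemma adjoint_starProjection_range (A : E →L[ℝ] F) [A.range.HasOrthogonalProjection] (g : F) :
    adjoint A (A.range.starProjection g) = adjoint A g := by
  have h := (adjoint_apply_eq_zero_iff_mem_orthogonal_range A _).2
    (Submodule.sub_starProjection_mem_orthogonal g)
  rw [map_sub, sub_eq_zero] at h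
  exact h.symm

lemma forall_norm_apply_sub_sq_le_iff (A : E →L[ℝ] F) [A.range.HasOrthogonalProjection]
    (g : F) (y : E) :
    (∀ w, ‖A y - g‖ ^ 2 ≤ ‖A w - g‖ ^ 2) ↔ A y = A.range.starProjection g := by
  have hsq : (∀ w, ‖A y - g‖ ^ 2 ≤ ‖A w - g‖ ^ 2) ↔ ∀ w, ‖g - A y‖ ≤ ‖g - A w‖ :=
    forall_congr' fun w => by
      rw [norm_sub_rev (A y), norm_sub_rev (A w),
        pow_le_pow_iff_left₀ (norm_nonneg _) (norm_nonneg _) two_ne_zero]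
  rw [hsq, forall_norm_sub_apply_le_iff_adjoint_apply_sub_eq_zero,
    adjoint_apply_eq_zero_iff_mem_orthogonal_range]
  refine ⟨fun h => (Submodule.eq_starProjection_of_mem_orthogonal
    (LinearMap.mem_range_self _ y) h).symm, fun h => ?_⟩
  rw [h]
  exact Submodule.sub_starProjection_mem_orthogonal g

lemma exists_norm_le_mul_norm_adjoint [FiniteDimensional ℝ F] (A : E →L[ℝ] F) :
    ∃ κ : ℝ, 0 < κ ∧ ∀ w ∈ A.range, ‖w‖ ≤ κ * ‖adjoint A w‖ := by
  have hker : LinearMap.ker ((adjoint A).toLinearMap ∘ₗ A.range.subtype) = ⊥ := by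
    rw [LinearMap.ker_eq_bot']
    rintro ⟨w, v, rfl⟩ hw
    have hw : adjoint A (A v) = 0 := hw
    have hAv : ⟪A v, A v⟫_ℝ = 0 := by rw [← adjoint_inner_right, hw, inner_zero_right]
    exact Subtype.ext (inner_self_eq_zero.1 hAv)
  obtain ⟨κ, hκ, hanti⟩ := LinearMap.exists_antilipschitzWith _ hker
  refine ⟨κ, hκ, fun w hw => ?_⟩
  simpa using hanti.le_mul_dist ⟨w, hw⟩ 0

end Range

section Dual

variable {s : ℕ} {F : Type*} [NormedAddCommGroup F] [InnerProductSpace ℝ F] [CompleteSpace F]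
  (A : EuclideanSpace ℝ (Fin s) →L[ℝ] F) {μ lam : ℝ}

/-- The Lagrange dual function of `min μ‖x‖₁ + ‖x‖²/(2λ)` subject to `A x = b`: the convex
conjugate of `μ‖·‖₁ + ‖·‖²/(2λ)` is `z ↦ λ‖S_μ z‖²/2`. -/
noncomputable def bregmanDual (μ lam : ℝ) (b p : F) : ℝ :=
  ⟪p, b⟫_ℝ - lam / 2 * ‖soft μ (adjoint A p)‖ ^ 2

lemma continuous_bregmanDual (hμ : 0 ≤ μ) (lam : ℝ) (b : F) :
    Continuous (bregmanDual A μ lam b) :=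
  (continuous_id.inner continuous_const).sub
    (continuous_const.mul (((continuous_soft hμ).comp (adjoint A).continuous).norm.pow 2))

lemma le_bregmanDual_add_smul (hμ : 0 ≤ μ) (hlam : 0 ≤ lam) (b p : F) (t : ℝ) :
    let r := b - lam • A (soft μ (adjoint A p))
    bregmanDual A μ lam b p + t * ‖r‖ ^ 2 - lam / 2 * t ^ 2 * ‖adjoint A r‖ ^ 2 ≤
      bregmanDual A μ lam b (p + t • r) := by
  intro r
  have hdesc := norm_soft_sq_le_add hμ (adjoint A p) (adjoint A (p + t • r))
  have hr : ‖r‖ ^ 2 = ⟪r, b⟫_ℝ - lam * ⟪soft μ (adjoint A p), adjoint A r⟫_ℝ := by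
    rw [adjoint_inner_right, real_inner_comm r, ← real_inner_self_eq_norm_sq,
      ← real_inner_smul_right, ← inner_sub_right]
  rw [map_add, map_smul, add_sub_cancel_left, real_inner_smul_right, norm_smul,
    Real.norm_eq_abs, mul_pow, sq_abs] at hdesc
  simp only [bregmanDual, inner_add_left, real_inner_smul_left, map_add, map_smul]
  rw [hr]
  linarith [mul_le_mul_of_nonneg_left hdesc (by linarith : 0 ≤ lam / 2)]

lemma exists_forall_le_bregmanDual [FiniteDimensional ℝ F] (hμ : 0 ≤ μ) (hlam : 0 < lam) (b : F) :
    ∃ p ∈ A.range, ∀ q ∈ A.range, bregmanDual A μ lam b q ≤ bregmanDual A μ lam b p := by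
  obtain ⟨κ, hκ, hA⟩ := exists_norm_le_mul_norm_adjoint A
  have : ProperSpace A.range := FiniteDimensional.proper_rclike ℝ _
  have hbound : ∀ q : A.range, bregmanDual A μ lam b q ≤
      -(lam / (4 * κ ^ 2)) * ‖q‖ ^ 2 + ‖b‖ * ‖q‖ + lam * s * μ ^ 2 / 2 := by
    rintro ⟨q, hq⟩
    have h1 : ‖q‖ ^ 2 ≤ κ ^ 2 * ‖adjoint A q‖ ^ 2 := by
      rw [← mul_pow]; exact pow_le_pow_left₀ (norm_nonneg _) (hA q hq) 2
    have h2 := norm_sq_le_two_mul_norm_soft_sq hμ (adjoint A q)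
    have h3 := real_inner_le_norm q b
    have h4 : lam / (4 * κ ^ 2) * ‖q‖ ^ 2 ≤ lam / 4 * ‖adjoint A q‖ ^ 2 := by
      rw [div_mul_eq_mul_div, div_le_iff₀ (by positivity)]
      nlinarith
    simp only [bregmanDual, Submodule.coe_norm]
    nlinarith
  obtain ⟨p, hp⟩ := exists_forall_le_of_le_neg_sq
    ((continuous_bregmanDual A hμ lam b).comp continuous_subtype_val) (by positivity) hbound
  exact ⟨p, p.2, fun q hq => hp ⟨q, hq⟩⟩

lemma exists_isFixedPt_bregmanStep [FiniteDimensional ℝ F] (hμ : 0 ≤ μ) (hlam : 0 < lam) {b : F}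
    (hb : b ∈ A.range) :
    ∃ p, IsFixedPt (bregmanStep A (soft μ) lam b) p := by
  obtain ⟨p, hp, hmax⟩ := exists_forall_le_bregmanDual A hμ hlam b
  set r := b - lam • A (soft μ (adjoint A p))
  have hr : r ∈ A.range :=
    Submodule.sub_mem _ hb (Submodule.smul_mem _ _ (LinearMap.mem_range_self _ _))
  -- moving from the maximizer `p` in the ascent direction `r` gains `t‖r‖² - O(t²)`
  have hsmall : ∀ t > 0, ‖r‖ ^ 2 ≤ lam / 2 * ‖adjoint A r‖ ^ 2 * t := fun t ht => by
    have h := (le_bregmanDual_add_smul A hμ hlam.le b p t).trans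
      (hmax _ (Submodule.add_mem _ hp (Submodule.smul_mem _ t hr)))
    nlinarith
  have hlim : Tendsto (fun t => lam / 2 * ‖adjoint A r‖ ^ 2 * t) (𝓝[>] 0) (𝓝 0) :=
    tendsto_nhdsWithin_of_tendsto_nhds ((continuous_const_mul _).tendsto' 0 0 (mul_zero _))
  have hr0 : r = 0 := by
    simpa using le_antisymm (ge_of_tendsto hlim (eventually_nhdsWithin_of_forall hsmall))
      (sq_nonneg _)
  exact ⟨p, isFixedPt_bregmanStep_iff.2 (sub_eq_zero.1 hr0).symm⟩

lemma objective_add_le (hμ : 0 ≤ μ) (hlam : 0 < lam) (z y : EuclideanSpace ℝ (Fin s)) :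
    let x := lam • soft μ z
    μ * l1norm x + 1 / (2 * lam) * ‖x‖ ^ 2 + ⟪z, y - x⟫_ℝ + 1 / (2 * lam) * ‖y - x‖ ^ 2 ≤
      μ * l1norm y + 1 / (2 * lam) * ‖y‖ ^ 2 := by
  intro x
  have hsub := inner_sub_soft_add_le hμ hlam.le z y
  have hy : 1 / (2 * lam) * ‖y‖ ^ 2 =
      1 / (2 * lam) * ‖x‖ ^ 2 + ⟪soft μ z, y - x⟫_ℝ + 1 / (2 * lam) * ‖y - x‖ ^ 2 := by
    rw [← add_sub_cancel x y, norm_add_sq_real, add_sub_cancel_left, real_inner_smul_left]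
    field_simp
  rw [inner_sub_left] at hsub
  linarith

lemma objective_add_le_of_apply_eq (hμ : 0 ≤ μ) (hlam : 0 < lam) {q : F}
    {y : EuclideanSpace ℝ (Fin s)} (hy : A y = A (lam • soft μ (adjoint A q))) :
    let x := lam • soft μ (adjoint A q)
    μ * l1norm x + 1 / (2 * lam) * ‖x‖ ^ 2 + 1 / (2 * lam) * ‖y - x‖ ^ 2 ≤
      μ * l1norm y + 1 / (2 * lam) * ‖y‖ ^ 2 := by
  intro x
  have h := objective_add_le hμ hlam (adjoint A q) y
  dsimp only at h
  rwa [adjoint_inner_left, map_sub, hy, sub_self, inner_zero_right, add_zero] at h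

lemma objective_le_of_apply_eq (hμ : 0 ≤ μ) (hlam : 0 < lam) {q : F}
    {y : EuclideanSpace ℝ (Fin s)} (hy : A y = A (lam • soft μ (adjoint A q))) :
    μ * l1norm (lam • soft μ (adjoint A q)) + 1 / (2 * lam) * ‖lam • soft μ (adjoint A q)‖ ^ 2 ≤
      μ * l1norm y + 1 / (2 * lam) * ‖y‖ ^ 2 := by
  have h := objective_add_le_of_apply_eq A hμ hlam hy
  have : 0 ≤ 1 / (2 * lam) * ‖y - lam • soft μ (adjoint A q)‖ ^ 2 := by positivity
  linarith

lemma eq_of_objective_le_of_apply_eq (hμ : 0 ≤ μ) (hlam : 0 < lam) {q : F}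
    {y : EuclideanSpace ℝ (Fin s)} (hy : A y = A (lam • soft μ (adjoint A q)))
    (hle : μ * l1norm y + 1 / (2 * lam) * ‖y‖ ^ 2 ≤
      μ * l1norm (lam • soft μ (adjoint A q)) + 1 / (2 * lam) * ‖lam • soft μ (adjoint A q)‖ ^ 2) :
    y = lam • soft μ (adjoint A q) := by
  have h := objective_add_le_of_apply_eq A hμ hlam hy
  have hd : ‖y - lam • soft μ (adjoint A q)‖ ^ 2 ≤ 0 :=
    nonpos_of_mul_nonpos_right (by linarith) (by positivity : 0 < 1 / (2 * lam))
  exact sub_eq_zero.1 (by simpa using le_antisymm hd (sq_nonneg _))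

lemma linearizedBregman_eq_iterate [A.range.HasOrthogonalProjection] {g : F}
    {z x : ℕ → EuclideanSpace ℝ (Fin s)}
    (hz0 : z 0 = 0) (hx0 : x 0 = 0) (hz : ∀ n, z (n + 1) = z n + adjoint A (g - A (x n)))
    (hx : ∀ n, x (n + 1) = lam • soft μ (z (n + 1))) (n : ℕ) :
    x n = lam • soft μ
      (adjoint A ((bregmanStep A (soft μ) lam (A.range.starProjection g))^[n] 0)) := by
  have hxz : ∀ n, x n = lam • soft μ (z n)
    | 0 => by rw [hx0, hz0, soft_zero, smul_zero]
    | n + 1 => hx n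
  have hzq : ∀ n, z n =
      adjoint A ((bregmanStep A (soft μ) lam (A.range.starProjection g))^[n] 0) := by
    intro n
    induction n with
    | zero => rw [hz0, iterate_zero_apply, map_zero]
    | succ n ih =>
      rw [hz n, hxz n, ih, iterate_succ_apply', bregmanStep, map_add, map_sub, map_sub,
        adjoint_starProjection_range, map_smul A]
  rw [hxz n, hzq n]

end Dual

section Matrix

variable {m s : ℕ} (K : Matrix (Fin m) (Fin s) ℝ)

lemma mulVecE_transpose (w : EuclideanSpace ℝ (Fin m)) :
    mulVecE Kᵀ w = adjoint (toEuclideanLin K).toContinuousLinearMap w := by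
  rw [← conjTranspose_eq_transpose_of_trivial]
  show toEuclideanLin Kᴴ w = _
  rw [toEuclideanLin_conjTranspose_eq_adjoint]
  rfl

lemma specNorm_transpose_mul_self :
    specNorm (Kᵀ * K) = ‖(toEuclideanLin K).toContinuousLinearMap‖ ^ 2 := by
  rw [sq, ← norm_adjoint_comp_self, specNorm]
  congr 1
  ext v : 1
  rw [ContinuousLinearMap.comp_apply, ← mulVecE_transpose]
  show mulVecE (Kᵀ * K) v = mulVecE Kᵀ (mulVecE K v)
  simp [mulVecE, Matrix.mulVec_mulVec]

lemma mul_norm_sq_le_one_of_lt_one_div_specNorm {lam : ℝ} (h : lam < 1 / specNorm (Kᵀ * K)) :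
    lam * ‖(toEuclideanLin K).toContinuousLinearMap‖ ^ 2 ≤ 1 := by
  rw [specNorm_transpose_mul_self] at h
  rcases (sq_nonneg ‖(toEuclideanLin K).toContinuousLinearMap‖).eq_or_lt with h0 | h0
  · rw [← h0, mul_zero]; exact zero_le_one
  · exact ((lt_div_iff₀ h0).1 h).le

end Matrix

theorem stmt0_general {m s : ℕ}
    (K : Matrix (Fin m) (Fin s) ℝ) (g : EuclideanSpace ℝ (Fin m))
    (μ lam : ℝ) (hμ : 0 < μ) (hlam0 : 0 < lam) (hlam1 : lam < 1 / specNorm (Kᵀ * K))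
    (z x : ℕ → EuclideanSpace ℝ (Fin s))
    (hz0 : z 0 = 0) (hx0 : x 0 = 0)
    (hz : ∀ n, z (n + 1) = z n + mulVecE Kᵀ (g - mulVecE K (x n)))
    (hx : ∀ n, x (n + 1) = lam • soft μ (z (n + 1))) :
    ∃ xstar : EuclideanSpace ℝ (Fin s),
      (∀ y, ‖mulVecE K xstar - g‖ ^ 2 ≤ ‖mulVecE K y - g‖ ^ 2) ∧
      (∀ y, (∀ w, ‖mulVecE K y - g‖ ^ 2 ≤ ‖mulVecE K w - g‖ ^ 2) →
        μ * l1norm xstar + (1 / (2 * lam)) * ‖xstar‖ ^ 2 ≤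
          μ * l1norm y + (1 / (2 * lam)) * ‖y‖ ^ 2) ∧
      (∀ y, (∀ w, ‖mulVecE K y - g‖ ^ 2 ≤ ‖mulVecE K w - g‖ ^ 2) →
        (∀ w, (∀ v, ‖mulVecE K w - g‖ ^ 2 ≤ ‖mulVecE K v - g‖ ^ 2) →
          μ * l1norm y + (1 / (2 * lam)) * ‖y‖ ^ 2 ≤
            μ * l1norm w + (1 / (2 * lam)) * ‖w‖ ^ 2) →
        y = xstar) ∧
      Tendsto x atTop (nhds xstar) := by
  set A := (toEuclideanLin K).toContinuousLinearMap
  set b := A.range.starProjection g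
  obtain ⟨p₀, hp₀⟩ :=
    exists_isFixedPt_bregmanStep A hμ.le hlam0 (A.range.starProjection_apply_mem g)
  obtain ⟨q, hq, hlim⟩ := exists_isFixedPt_tendsto_iterate
    (continuous_bregmanStep A (continuous_soft hμ.le) lam b)
    (fun p hp => dist_bregmanStep_sq_add_le A (norm_soft_sub_soft_sq_le_inner hμ.le) hlam0.le
      (mul_norm_sq_le_one_of_lt_one_div_specNorm K hlam1) hp) hp₀ 0
  have hxq : x = fun n => lam • soft μ (adjoint A ((bregmanStep A (soft μ) lam b)^[n] 0)) :=
    funext <| linearizedBregman_eq_iterate A hz0 hx0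
      (fun n => by rw [hz n, mulVecE_transpose]; rfl) hx
  have hsol : A (lam • soft μ (adjoint A q)) = b := by
    rw [map_smul]; exact isFixedPt_bregmanStep_iff.1 hq
  refine ⟨lam • soft μ (adjoint A q), ?_⟩
  simp only [show ∀ v, mulVecE K v = A v from fun _ => rfl, forall_norm_apply_sub_sq_le_iff]
  refine ⟨hsol, fun y hy => objective_le_of_apply_eq A hμ.le hlam0 (hy.trans hsol.symm),
    fun y hy hmin => eq_of_objective_le_of_apply_eq A hμ.le hlam0 (hy.trans hsol.symm)
      (hmin _ hsol), ?_⟩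
  rw [hxq]
  exact ((((continuous_soft hμ.le).comp (adjoint A).continuous).const_smul lam).tendsto q).comp
    hlim

/-- Convergence of the linearized Bregman iteration (Theorem 3.1 of the paper):
with `0 < λ < 1/‖KᵀK‖`, the iterates `x^n` converge to the unique minimizer of
`μ‖x‖₁ + (1/(2λ))‖x‖²` over the set of minimizers of `‖Kx − g‖²`. -/
theorem stmt0 {m s : ℕ} (hms : m < s)
    (K : Matrix (Fin m) (Fin s) ℝ) (g : EuclideanSpace ℝ (Fin m))
    (μ lam : ℝ) (hμ : 0 < μ) (hlam0 : 0 < lam) (hlam1 : lam < 1 / specNorm (Kᵀ * K))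
    (z x : ℕ → EuclideanSpace ℝ (Fin s))
    (hz0 : z 0 = 0) (hx0 : x 0 = 0)
    (hz : ∀ n, z (n + 1) = z n + mulVecE Kᵀ (g - mulVecE K (x n)))
    (hx : ∀ n, x (n + 1) = lam • soft μ (z (n + 1))) :
    ∃ xstar : EuclideanSpace ℝ (Fin s),
      (∀ y, ‖mulVecE K xstar - g‖ ^ 2 ≤ ‖mulVecE K y - g‖ ^ 2) ∧
      (∀ y, (∀ w, ‖mulVecE K y - g‖ ^ 2 ≤ ‖mulVecE K w - g‖ ^ 2) →
        μ * l1norm xstar + (1 / (2 * lam)) * ‖xstar‖ ^ 2 ≤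
          μ * l1norm y + (1 / (2 * lam)) * ‖y‖ ^ 2) ∧
      (∀ y, (∀ w, ‖mulVecE K y - g‖ ^ 2 ≤ ‖mulVecE K w - g‖ ^ 2) →
        (∀ w, (∀ v, ‖mulVecE K w - g‖ ^ 2 ≤ ‖mulVecE K v - g‖ ^ 2) →
          μ * l1norm y + (1 / (2 * lam)) * ‖y‖ ^ 2 ≤
            μ * l1norm w + (1 / (2 * lam)) * ‖w‖ ^ 2) →
        y = xstar) ∧
      Tendsto x atTop (nhds xstar) :=
  stmt0_general K g μ lam hμ hlam0 hlam1 z x hz0 hx0 hz hx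
end

section
/- Under the standing assumptions, let z ∈ ℝ^s, set r = g^δ − K·S_μ(z) and ẽ = x − z, and suppose ‖r‖ > τδ. Setting τ_n = ‖r‖/δ, one has ‖r − Lẽ‖ ≤ (ρ + (1+2ρ)/τ_n)·‖r‖ < (1 − ρ)·‖r‖. -/
open Matrix Filter

/-! With `e = x - S_μ z` the residual splits as
`r - L ẽ = (g^δ - K x) - (L - K) e + L (z - S_μ z)`.
The three terms are bounded by `δ`, by `ρ ‖K e‖ ≤ ρ (‖r‖ + δ)` (assumption (i), as
`K e = r - (g^δ - K x)`) and by `ρ δ` (assumption (ii)), so `‖r - L ẽ‖ ≤ ρ ‖r‖ + (1 + 2ρ) δ`,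
which is `< (1 - ρ) ‖r‖` exactly when `‖r‖ > τ δ`. -/

theorem norm_sub_map_sub_le_of_relative_error {X Y : Type*} [AddCommGroup X]
    [SeminormedAddCommGroup Y] (K L : X →+ Y) {ρ δ : ℝ} (hρ : 0 ≤ ρ)
    (hKL : ∀ e, ‖L e - K e‖ ≤ ρ * ‖K e‖) {g : Y} {x z w : X} (hg : ‖g - K x‖ ≤ δ)
    (hw : ‖L (z - w)‖ ≤ ρ * δ) :
    ‖g - K w - L (x - z)‖ ≤ ρ * ‖g - K w‖ + (1 + 2 * ρ) * δ := by
  have hsplit : g - K w - L (x - z) = (g - K x) - (L (x - w) - K (x - w)) + L (z - w) := by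
    simp only [map_sub]; abel
  have hKe : ‖K (x - w)‖ ≤ ‖g - K w‖ + δ := by
    calc ‖K (x - w)‖ = ‖(g - K w) - (g - K x)‖ := by rw [map_sub]; abel_nf
      _ ≤ ‖g - K w‖ + ‖g - K x‖ := norm_sub_le _ _
      _ ≤ ‖g - K w‖ + δ := by gcongr
  calc ‖g - K w - L (x - z)‖
      ≤ ‖g - K x‖ + ‖L (x - w) - K (x - w)‖ + ‖L (z - w)‖ := by
        rw [hsplit]
        exact (norm_add_le _ _).trans (by gcongr; exact norm_sub_le _ _)
    _ ≤ δ + ρ * (‖g - K w‖ + δ) + ρ * δ := by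
        gcongr
        exact (hKL _).trans (by gcongr)
    _ = ρ * ‖g - K w‖ + (1 + 2 * ρ) * δ := by ring

lemma mulVecE_add {m n : ℕ} (M : Matrix (Fin m) (Fin n) ℝ) (u v : EuclideanSpace ℝ (Fin n)) :
    mulVecE M (u + v) = mulVecE M u + mulVecE M v := by
  simp [mulVecE, Matrix.mulVec_add]

noncomputable def mulVecEHom {m n : ℕ} (M : Matrix (Fin m) (Fin n) ℝ) :
    EuclideanSpace ℝ (Fin n) →+ EuclideanSpace ℝ (Fin m) :=
  AddMonoidHom.mk' (mulVecE M) (mulVecE_add M)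

lemma mulVecE_mul {m n p : ℕ} (M : Matrix (Fin m) (Fin n) ℝ) (M' : Matrix (Fin n) (Fin p) ℝ)
    (v : EuclideanSpace ℝ (Fin p)) : mulVecE (M * M') v = mulVecE M (mulVecE M' v) := by
  simp [mulVecE, Matrix.mulVec_mulVec]

lemma mulVecE_sub_left {m n : ℕ} (M M' : Matrix (Fin m) (Fin n) ℝ)
    (v : EuclideanSpace ℝ (Fin n)) : mulVecE (M - M') v = mulVecE M v - mulVecE M' v := by
  simp [mulVecE, Matrix.sub_mulVec]

theorem stmt5_general {N s : ℕ}
    (A C : Matrix (Fin N) (Fin N) ℝ) (W : Matrix (Fin s) (Fin N) ℝ)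
    (ρ μ δ : ℝ) (hρ0 : 0 < ρ) (hρ1 : ρ < 1 / 2) (hδ : 0 < δ)
    (hi : ∀ v : EuclideanSpace ℝ (Fin N), ‖mulVecE (C - A) v‖ ≤ ρ * ‖mulVecE A v‖)
    (hii : ∀ u : EuclideanSpace ℝ (Fin s), ‖mulVecE (C * Wᵀ) (u - soft μ u)‖ ≤ ρ * δ)
    (x : EuclideanSpace ℝ (Fin s)) (gδ : EuclideanSpace ℝ (Fin N))
    (hgδ : ‖gδ - mulVecE (A * Wᵀ) x‖ ≤ δ)
    (z : EuclideanSpace ℝ (Fin s))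
    (r : EuclideanSpace ℝ (Fin N)) (hr : r = gδ - mulVecE (A * Wᵀ) (soft μ z))
    (etilde : EuclideanSpace ℝ (Fin s)) (he : etilde = x - z)
    (hbig : ‖r‖ > ((1 + 2 * ρ) / (1 - 2 * ρ)) * δ) :
    ‖r - mulVecE (C * Wᵀ) etilde‖ ≤ (ρ + (1 + 2 * ρ) / (‖r‖ / δ)) * ‖r‖ ∧
    (ρ + (1 + 2 * ρ) / (‖r‖ / δ)) * ‖r‖ < (1 - ρ) * ‖r‖ := by
  have h2ρ : 0 < 1 - 2 * ρ := by linarith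
  have hr0 : 0 < ‖r‖ := hbig.trans_le' (by positivity)
  have hτ : (ρ + (1 + 2 * ρ) / (‖r‖ / δ)) * ‖r‖ = ρ * ‖r‖ + (1 + 2 * ρ) * δ := by field_simp
  rw [hτ]
  constructor
  · have hKL (e : EuclideanSpace ℝ (Fin s)) :
        ‖mulVecE (C * Wᵀ) e - mulVecE (A * Wᵀ) e‖ ≤ ρ * ‖mulVecE (A * Wᵀ) e‖ := by
      simpa only [mulVecE_sub_left, mulVecE_mul] using hi (mulVecE Wᵀ e)
    subst hr he
    exact norm_sub_map_sub_le_of_relative_error (mulVecEHom (A * Wᵀ)) (mulVecEHom (C * Wᵀ))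
      hρ0.le hKL hgδ (hii z)
  · have : (1 + 2 * ρ) * δ < ‖r‖ * (1 - 2 * ρ) := by
      rwa [gt_iff_lt, div_mul_eq_mul_div, div_lt_iff₀ h2ρ] at hbig
    linarith

/-- Proposition 1 of the paper: under the standing assumptions, if `‖r‖ > τδ` then,
with `τ_n = ‖r‖/δ`, `‖r − Lẽ‖ ≤ (ρ + (1+2ρ)/τ_n)‖r‖ < (1 − ρ)‖r‖`. -/
theorem stmt5 {N s : ℕ} (hN : 0 < N) (hs : 0 < s) (hNs : N ≤ s)
    (A C : Matrix (Fin N) (Fin N) ℝ) (W : Matrix (Fin s) (Fin N) ℝ)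
    (hW : Wᵀ * W = (1 : Matrix (Fin N) (Fin N) ℝ))
    (ρ μ δ : ℝ) (hρ0 : 0 < ρ) (hρ1 : ρ < 1 / 2) (hμ : 0 ≤ μ) (hδ : 0 < δ)
    (hi : ∀ v : EuclideanSpace ℝ (Fin N), ‖mulVecE (C - A) v‖ ≤ ρ * ‖mulVecE A v‖)
    (hii : ∀ u : EuclideanSpace ℝ (Fin s), ‖mulVecE (C * Wᵀ) (u - soft μ u)‖ ≤ ρ * δ)
    (x : EuclideanSpace ℝ (Fin s)) (gδ : EuclideanSpace ℝ (Fin N))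
    (hgδ : ‖gδ - mulVecE (A * Wᵀ) x‖ ≤ δ)
    (z : EuclideanSpace ℝ (Fin s))
    (r : EuclideanSpace ℝ (Fin N)) (hr : r = gδ - mulVecE (A * Wᵀ) (soft μ z))
    (etilde : EuclideanSpace ℝ (Fin s)) (he : etilde = x - z)
    (hbig : ‖r‖ > ((1 + 2 * ρ) / (1 - 2 * ρ)) * δ) :
    ‖r - mulVecE (C * Wᵀ) etilde‖ ≤ (ρ + (1 + 2 * ρ) / (‖r‖ / δ)) * ‖r‖ ∧
    (ρ + (1 + 2 * ρ) / (‖r‖ / δ)) * ‖r‖ < (1 - ρ) * ‖r‖ :=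
  stmt5_general A C W ρ μ δ hρ0 hρ1 hδ hi hii x gδ hgδ z r hr etilde he hbig
end

section
/- Under the standing assumptions, fix q ∈ (2ρ, 1). Let z ∈ ℝ^s, set r = g^δ − K·S_μ(z), and suppose ‖r‖ > τδ. Set τ_n = ‖r‖/δ and q_n = max{q, 2ρ + (1+ρ)/τ_n}, let α > 0 satisfy α‖(CCᵀ + αI)⁻¹r‖ = q_n‖r‖, and set z' = z + WCᵀ(CCᵀ + αI)⁻¹r. Then ‖x − z‖² − ‖x − z'‖² ≥ (8ρ²/(1+2ρ))·‖(CCᵀ + αI)⁻¹r‖·‖r‖; in particular ‖x − z'‖ ≤ ‖x − z‖. -/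
/-!
Write `T = C Wᵀ` and `y = (C Cᵀ + α I)⁻¹ r`. Then `z' = z + Tᵀ y`, and `Wᵀ W = I` gives
`T Tᵀ = C Cᵀ`, so `(T Tᵀ + α) y = r`. Expanding the square,
`‖x - z‖² - ‖x - z'‖² = ‖Tᵀ y‖² + 2α‖y‖² + 2⟪T (x - z) - r, y⟫ ≥ 2‖y‖ (α‖y‖ - ‖T (x - z) - r‖)`.
The two perturbation assumptions and the noise bound give
`‖T (x - z) - r‖ ≤ ρ‖r‖ + (1 + 2ρ)δ`, while the choice of `α` gives
`α‖y‖ ≥ 2ρ‖r‖ + (1 + ρ)δ`. The gap `ρ(‖r‖ - δ)` is at least `4ρ²‖r‖/(1 + 2ρ)` because `‖r‖ > τδ`.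
-/

open Matrix Filter

open RealInnerProductSpace

lemma mulVecE_eq_toEuclideanLin {m n : ℕ} (M : Matrix (Fin m) (Fin n) ℝ)
    (v : EuclideanSpace ℝ (Fin n)) : mulVecE M v = M.toEuclideanLin v :=
  rfl

section

variable {k m n : Type*} [Fintype k] [DecidableEq k] [Fintype m] [DecidableEq m] [Fintype n]

theorem Matrix.posDef_mul_transpose_add_smul_one (C : Matrix m n ℝ) {α : ℝ} (hα : 0 < α) :
    (C * Cᵀ + α • 1).PosDef := by
  simpa using PosDef.posSemidef_add C.posSemidef_self_mul_conjTranspose (PosDef.one.smul hα)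

theorem Matrix.toEuclideanLin_mul_transpose_add_smul_inv_apply (C : Matrix m n ℝ) {α : ℝ}
    (hα : 0 < α) (r : EuclideanSpace ℝ m) :
    (C * Cᵀ).toEuclideanLin ((C * Cᵀ + α • 1)⁻¹.toEuclideanLin r) +
      α • (C * Cᵀ + α • 1)⁻¹.toEuclideanLin r = r := by
  have hB := mul_nonsing_inv _ (C.posDef_mul_transpose_add_smul_one hα).det_pos.ne'.isUnit
  conv_rhs => rw [← LinearMap.id_apply (R := ℝ) r, ← toLpLin_one, ← hB, toLpLin_mul_same]
  simp only [LinearMap.coe_comp, Function.comp_apply, map_add, map_smul, toLpLin_one,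
    LinearMap.add_apply, LinearMap.smul_apply, LinearMap.id_apply]

theorem Matrix.adjoint_toEuclideanLin_mul_transpose (C : Matrix m n ℝ) (W : Matrix k n ℝ) :
    (C * Wᵀ).toEuclideanLin.adjoint = (W * Cᵀ).toEuclideanLin := by
  rw [← toEuclideanLin_conjTranspose_eq_adjoint, conjTranspose_eq_transpose_of_trivial,
    transpose_mul, transpose_transpose]

theorem Matrix.toEuclideanLin_mul_transpose_comp_adjoint [DecidableEq n] (C : Matrix m n ℝ)
    {W : Matrix k n ℝ} (hW : Wᵀ * W = 1) :
    (C * Wᵀ).toEuclideanLin ∘ₗ (C * Wᵀ).toEuclideanLin.adjoint = (C * Cᵀ).toEuclideanLin := by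
  rw [adjoint_toEuclideanLin_mul_transpose, ← toLpLin_mul_same, Matrix.mul_assoc,
    ← Matrix.mul_assoc Wᵀ, hW, Matrix.one_mul]

end

theorem norm_sq_sub_norm_sq_sub_adjoint_ge {E F : Type*} [NormedAddCommGroup E]
    [InnerProductSpace ℝ E] [FiniteDimensional ℝ E] [NormedAddCommGroup F]
    [InnerProductSpace ℝ F] [FiniteDimensional ℝ F] (T : E →ₗ[ℝ] F) (h : E) {y r : F} {α : ℝ}
    (hr : T (T.adjoint y) + α • y = r) :
    2 * ‖y‖ * (α * ‖y‖ - ‖T h - r‖) ≤ ‖h‖ ^ 2 - ‖h - T.adjoint y‖ ^ 2 := by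
  have hry : ⟪r, y⟫ = ‖T.adjoint y‖ ^ 2 + α * ‖y‖ ^ 2 := by
    rw [← hr, inner_add_left, real_inner_comm, ← LinearMap.adjoint_inner_left,
      real_inner_smul_left, real_inner_self_eq_norm_sq, real_inner_self_eq_norm_sq]
  have hhy : ⟪h, T.adjoint y⟫ = ⟪r, y⟫ + ⟪T h - r, y⟫ := by
    rw [LinearMap.adjoint_inner_right, ← inner_add_left, add_sub_cancel]
  rw [norm_sub_sq_real, hhy, hry]
  nlinarith [sq_nonneg ‖T.adjoint y‖, abs_le.mp (abs_real_inner_le_norm (T h - r) y)]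

theorem norm_map_sub_sub_residual_le {X Y : Type*} [AddCommGroup X] [Module ℝ X]
    [NormedAddCommGroup Y] [Module ℝ Y] (K L : X →ₗ[ℝ] Y) {ρ δ : ℝ} (hρ : 0 ≤ ρ) {x z p : X}
    {g : Y} (hLK : ‖(L - K) (x - p)‖ ≤ ρ * ‖K (x - p)‖) (hp : ‖L (z - p)‖ ≤ ρ * δ)
    (hg : ‖g - K x‖ ≤ δ) :
    ‖L (x - z) - (g - K p)‖ ≤ ρ * ‖g - K p‖ + (1 + 2 * ρ) * δ := by
  have hsplit : L (x - z) - (g - K p) = (L - K) (x - p) - L (z - p) - (g - K x) := by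
    simp only [LinearMap.sub_apply, map_sub]; abel
  have hK : ‖K (x - p)‖ ≤ ‖g - K p‖ + δ := by
    rw [show K (x - p) = (g - K p) - (g - K x) by rw [map_sub]; abel]
    exact (norm_sub_le _ _).trans (by linarith)
  calc ‖L (x - z) - (g - K p)‖
      ≤ ‖(L - K) (x - p)‖ + ‖L (z - p)‖ + ‖g - K x‖ := by
        rw [hsplit]
        exact (norm_sub_le _ _).trans (by linarith [norm_sub_le ((L - K) (x - p)) (L (z - p))])
    _ ≤ ρ * (‖g - K p‖ + δ) + ρ * δ + δ := by gcongr; exact hLK.trans (by gcongr)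
    _ = ρ * ‖g - K p‖ + (1 + 2 * ρ) * δ := by ring

theorem add_mul_le_max_div_mul (a b q : ℝ) {R : ℝ} (hR : 0 < R) (δ : ℝ) :
    a * R + b * δ ≤ max q (a + b / (R / δ)) * R := by
  calc a * R + b * δ = (a + b / (R / δ)) * R := by
        rcases eq_or_ne δ 0 with rfl | hδ
        · simp
        · field_simp
    _ ≤ max q (a + b / (R / δ)) * R := by gcongr; exact le_max_right _ _

theorem four_mul_sq_div_mul_le_mul_sub {ρ δ R : ℝ} (hρ0 : 0 ≤ ρ) (hρ1 : ρ < 1 / 2)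
    (hR : (1 + 2 * ρ) / (1 - 2 * ρ) * δ < R) : 4 * ρ ^ 2 / (1 + 2 * ρ) * R ≤ ρ * (R - δ) := by
  rw [div_mul_eq_mul_div, div_lt_iff₀ (by linarith)] at hR
  rw [div_mul_eq_mul_div, div_le_iff₀ (by linarith)]
  nlinarith

theorem stmt6_general {N s : ℕ}
    (A C : Matrix (Fin N) (Fin N) ℝ) (W : Matrix (Fin s) (Fin N) ℝ)
    (hW : Wᵀ * W = (1 : Matrix (Fin N) (Fin N) ℝ))
    (ρ μ δ : ℝ) (hρ0 : 0 < ρ) (hρ1 : ρ < 1 / 2) (hδ : 0 < δ)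
    (hi : ∀ v : EuclideanSpace ℝ (Fin N), ‖mulVecE (C - A) v‖ ≤ ρ * ‖mulVecE A v‖)
    (hii : ∀ u : EuclideanSpace ℝ (Fin s), ‖mulVecE (C * Wᵀ) (u - soft μ u)‖ ≤ ρ * δ)
    (x : EuclideanSpace ℝ (Fin s)) (gδ : EuclideanSpace ℝ (Fin N))
    (hgδ : ‖gδ - mulVecE (A * Wᵀ) x‖ ≤ δ)
    (q : ℝ)
    (z : EuclideanSpace ℝ (Fin s))
    (r : EuclideanSpace ℝ (Fin N)) (hr : r = gδ - mulVecE (A * Wᵀ) (soft μ z))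
    (hbig : ‖r‖ > ((1 + 2 * ρ) / (1 - 2 * ρ)) * δ)
    (α : ℝ) (hα : 0 < α)
    (hαeq : α * ‖mulVecE (C * Cᵀ + α • (1 : Matrix (Fin N) (Fin N) ℝ))⁻¹ r‖ =
      max q (2 * ρ + (1 + ρ) / (‖r‖ / δ)) * ‖r‖)
    (z' : EuclideanSpace ℝ (Fin s))
    (hz' : z' = z + mulVecE (W * Cᵀ * (C * Cᵀ + α • (1 : Matrix (Fin N) (Fin N) ℝ))⁻¹) r) :
    ‖x - z‖ ^ 2 - ‖x - z'‖ ^ 2 ≥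
      (8 * ρ ^ 2 / (1 + 2 * ρ)) *
        ‖mulVecE (C * Cᵀ + α • (1 : Matrix (Fin N) (Fin N) ℝ))⁻¹ r‖ * ‖r‖ ∧
    ‖x - z'‖ ≤ ‖x - z‖ := by
  simp only [mulVecE_eq_toEuclideanLin] at *
  set y := (C * Cᵀ + α • (1 : Matrix (Fin N) (Fin N) ℝ))⁻¹.toEuclideanLin r
  set T := (C * Wᵀ).toEuclideanLin
  have hy : T (T.adjoint y) + α • y = r := by
    rw [← LinearMap.comp_apply, C.toEuclideanLin_mul_transpose_comp_adjoint hW]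
    exact C.toEuclideanLin_mul_transpose_add_smul_inv_apply hα r
  have hz'' : z' = z + T.adjoint y := by
    rw [hz', adjoint_toEuclideanLin_mul_transpose, toLpLin_mul_same, LinearMap.comp_apply]
  have hres : ‖T (x - z) - r‖ ≤ ρ * ‖r‖ + (1 + 2 * ρ) * δ := by
    set K := (A * Wᵀ).toEuclideanLin with hK
    have hLK : ‖(T - K) (x - soft μ z)‖ ≤ ρ * ‖K (x - soft μ z)‖ := by
      rw [← map_sub, ← Matrix.sub_mul, hK, toLpLin_mul_same, toLpLin_mul_same]
      exact hi _
    rw [hr]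
    exact norm_map_sub_sub_residual_le K T hρ0.le hLK (hii z) hgδ
  have hrpos : 0 < ‖r‖ := lt_trans (mul_pos (div_pos (by linarith) (by linarith)) hδ) hbig
  have hαy : 2 * ρ * ‖r‖ + (1 + ρ) * δ ≤ α * ‖y‖ :=
    hαeq ▸ add_mul_le_max_div_mul (2 * ρ) (1 + ρ) q hrpos δ
  have hdecr : 8 * ρ ^ 2 / (1 + 2 * ρ) * ‖y‖ * ‖r‖ ≤ ‖x - z‖ ^ 2 - ‖x - z'‖ ^ 2 := by
    calc 8 * ρ ^ 2 / (1 + 2 * ρ) * ‖y‖ * ‖r‖ = 2 * ‖y‖ * (4 * ρ ^ 2 / (1 + 2 * ρ) * ‖r‖) := by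
          ring
      _ ≤ 2 * ‖y‖ * (ρ * (‖r‖ - δ)) := by
          gcongr 2 * ‖y‖ * ?_; exact four_mul_sq_div_mul_le_mul_sub hρ0.le hρ1 hbig
      _ ≤ 2 * ‖y‖ * (α * ‖y‖ - ‖T (x - z) - r‖) := by gcongr 2 * ‖y‖ * ?_; linarith
      _ ≤ ‖x - z‖ ^ 2 - ‖x - z'‖ ^ 2 := by
          rw [hz'', ← sub_sub]; exact norm_sq_sub_norm_sq_sub_adjoint_ge T (x - z) hy
  refine ⟨hdecr, (sq_le_sq₀ (norm_nonneg _) (norm_nonneg _)).1 (sub_nonneg.1 (le_trans ?_ hdecr))⟩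
  have : 0 < 1 + 2 * ρ := by linarith
  positivity

/-- Proposition 2 of the paper (single-step monotonicity of the partial error):
under the standing assumptions, one step of the nonstationary iteration satisfies
`‖x − z‖² − ‖x − z'‖² ≥ (8ρ²/(1+2ρ))·‖(CCᵀ + αI)⁻¹r‖·‖r‖`, hence `‖x − z'‖ ≤ ‖x − z‖`. -/
theorem stmt6 {N s : ℕ} (hN : 0 < N) (hs : 0 < s) (hNs : N ≤ s)
    (A C : Matrix (Fin N) (Fin N) ℝ) (W : Matrix (Fin s) (Fin N) ℝ)
    (hW : Wᵀ * W = (1 : Matrix (Fin N) (Fin N) ℝ))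
    (ρ μ δ : ℝ) (hρ0 : 0 < ρ) (hρ1 : ρ < 1 / 2) (hμ : 0 ≤ μ) (hδ : 0 < δ)
    (hi : ∀ v : EuclideanSpace ℝ (Fin N), ‖mulVecE (C - A) v‖ ≤ ρ * ‖mulVecE A v‖)
    (hii : ∀ u : EuclideanSpace ℝ (Fin s), ‖mulVecE (C * Wᵀ) (u - soft μ u)‖ ≤ ρ * δ)
    (x : EuclideanSpace ℝ (Fin s)) (gδ : EuclideanSpace ℝ (Fin N))
    (hgδ : ‖gδ - mulVecE (A * Wᵀ) x‖ ≤ δ)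
    (q : ℝ) (hq0 : 2 * ρ < q) (hq1 : q < 1)
    (z : EuclideanSpace ℝ (Fin s))
    (r : EuclideanSpace ℝ (Fin N)) (hr : r = gδ - mulVecE (A * Wᵀ) (soft μ z))
    (hbig : ‖r‖ > ((1 + 2 * ρ) / (1 - 2 * ρ)) * δ)
    (α : ℝ) (hα : 0 < α)
    (hαeq : α * ‖mulVecE (C * Cᵀ + α • (1 : Matrix (Fin N) (Fin N) ℝ))⁻¹ r‖ =
      max q (2 * ρ + (1 + ρ) / (‖r‖ / δ)) * ‖r‖)
    (z' : EuclideanSpace ℝ (Fin s))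
    (hz' : z' = z + mulVecE (W * Cᵀ * (C * Cᵀ + α • (1 : Matrix (Fin N) (Fin N) ℝ))⁻¹) r) :
    ‖x - z‖ ^ 2 - ‖x - z'‖ ^ 2 ≥
      (8 * ρ ^ 2 / (1 + 2 * ρ)) *
        ‖mulVecE (C * Cᵀ + α • (1 : Matrix (Fin N) (Fin N) ℝ))⁻¹ r‖ * ‖r‖ ∧
    ‖x - z'‖ ≤ ‖x - z‖ :=
  stmt6_general A C W hW ρ μ δ hρ0 hρ1 hδ hi hii x gδ hgδ q z r hr hbig α hα hαeq z' hz'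
end

section
/- Let C be an invertible real N×N matrix, r ∈ ℝ^N with r ≠ 0, and 0 < q < 1. Then there exists a unique α > 0 such that α‖(CCᵀ + αI)⁻¹r‖ = q‖r‖. -/
open Matrix Filter

/-!
Diagonalise `M = C Cᵀ`, which is positive definite, in an orthonormal eigenbasis `(bᵢ)` with
eigenvalues `λᵢ > 0`, and put `cᵢ = ⟪bᵢ, r⟫`. The coordinates of `(M + αI)⁻¹ r` are
`cᵢ / (λᵢ + α)`, so `(α ‖(M + αI)⁻¹ r‖)² = ∑ᵢ (α / (λᵢ + α))² cᵢ²`. On `α ≥ 0` this is continuous,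
vanishes at `0`, is strictly increasing and tends to `∑ᵢ cᵢ² = ‖r‖²`, so it takes the value
`q² ‖r‖²` exactly once.
-/

open Set Topology

theorem existsUnique_pos_eq_of_tendsto_atTop {g : ℝ → ℝ} {y L : ℝ}
    (hcont : ContinuousOn g (Ici 0)) (hmono : StrictMonoOn g (Ioi 0)) (h0 : g 0 < y)
    (hlim : Tendsto g atTop (𝓝 L)) (hyL : y < L) : ∃! α, 0 < α ∧ g α = y := by
  obtain ⟨b, hyb, hb⟩ := ((hlim.eventually (lt_mem_nhds hyL)).and (eventually_ge_atTop 0)).exists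
  obtain ⟨α, hα, hgα⟩ := intermediate_value_Ioo hb (hcont.mono Icc_subset_Ici_self) ⟨h0, hyb⟩
  exact ⟨α, ⟨hα.1, hgα⟩, fun β hβ => hmono.injOn hβ.1 hα.1 (hβ.2.trans hgα.symm)⟩

theorem strictMonoOn_div_const_add {c : ℝ} (hc : 0 < c) :
    StrictMonoOn (fun α : ℝ => α / (c + α)) (Ici 0) := by
  intro x hx y hy hxy
  simp only [mem_Ici] at hx hy
  rw [div_lt_div_iff₀ (by linarith) (by linarith)]
  nlinarith

theorem tendsto_div_const_add_atTop (c : ℝ) :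
    Tendsto (fun α : ℝ => α / (c + α)) atTop (𝓝 1) := by
  have h : Tendsto (fun α : ℝ => (c / α + 1)⁻¹) atTop (𝓝 1) := by
    simpa using ((tendsto_const_nhds (x := c)).div_atTop tendsto_id).add_const 1
      |>.inv₀ (by norm_num)
  refine h.congr' ((eventually_gt_atTop 0).mono fun α hα => ?_)
  field_simp

theorem existsUnique_pos_sum_div_add_sq_eq {ι : Type*} [Fintype ι] {lam c : ι → ℝ}
    (hlam : ∀ i, 0 < lam i) {y : ℝ} (hy0 : 0 < y) (hy : y < ∑ i, c i ^ 2) :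
    ∃! α, 0 < α ∧ ∑ i, (α / (lam i + α)) ^ 2 * c i ^ 2 = y := by
  have hterm_mono (i : ι) : StrictMonoOn (fun α : ℝ => (α / (lam i + α)) ^ 2) (Ici 0) :=
    fun s hs t ht hst => pow_lt_pow_left₀ (strictMonoOn_div_const_add (hlam i) hs ht hst)
      (div_nonneg hs (by linarith [hlam i, mem_Ici.mp hs])) two_ne_zero
  obtain ⟨i₀, -, hi₀⟩ : ∃ i ∈ Finset.univ, c i ^ 2 ≠ 0 := by
    by_contra! h
    rw [Finset.sum_eq_zero h] at hy
    linarith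
  refine existsUnique_pos_eq_of_tendsto_atTop (L := ∑ i, c i ^ 2) ?_ ?_ ?_ ?_ hy
  · refine continuousOn_finsetSum _ fun i _ => ?_
    exact ((continuousOn_id.div (continuousOn_const.add continuousOn_id)
      fun s hs => (add_pos_of_pos_of_nonneg (hlam i) hs).ne').pow 2).mul continuousOn_const
  · intro s hs t ht hst
    refine Finset.sum_lt_sum (fun i _ => ?_) ⟨i₀, Finset.mem_univ _, ?_⟩
    · exact mul_le_mul_of_nonneg_right ((hterm_mono i).monotoneOn (Ioi_subset_Ici_self hs)
        (Ioi_subset_Ici_self ht) hst.le) (sq_nonneg _)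
    · exact mul_lt_mul_of_pos_right (hterm_mono i₀ (Ioi_subset_Ici_self hs)
        (Ioi_subset_Ici_self ht) hst) (lt_of_le_of_ne (sq_nonneg _) hi₀.symm)
  · simpa using hy0
  · simpa using tendsto_finsetSum Finset.univ fun i _ =>
      ((tendsto_div_const_add_atTop (lam i)).pow 2).mul_const (c i ^ 2)

open scoped RealInnerProductSpace

namespace Matrix.IsHermitian

variable {N : ℕ} {A : Matrix (Fin N) (Fin N) ℝ} {α : ℝ}

theorem eigenvalues_add_mul_inner_mulVecE_inv (hA : A.IsHermitian) (hu : IsUnit (A + α • 1))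
    (r : EuclideanSpace ℝ (Fin N)) (i : Fin N) :
    (hA.eigenvalues i + α) * ⟪hA.eigenvectorBasis i, mulVecE (A + α • 1)⁻¹ r⟫ =
      ⟪hA.eigenvectorBasis i, r⟫ := by
  set B := A + α • (1 : Matrix (Fin N) (Fin N) ℝ)
  have hB : B.toEuclideanLin.IsSymmetric :=
    isSymmetric_toEuclideanLin_iff.mpr (hA.add (isHermitian_one.smul (IsSelfAdjoint.all α)))
  have hBb : B.toEuclideanLin (hA.eigenvectorBasis i) =
      (hA.eigenvalues i + α) • hA.eigenvectorBasis i := by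
    ext j
    simp [B, toLpLin_apply, hA.mulVec_eigenvectorBasis, add_smul]
  have hBw : B.toEuclideanLin (mulVecE B⁻¹ r) = r := by
    ext j
    simp [mulVecE, toLpLin_apply, mulVec_mulVec,
      mul_nonsing_inv _ ((isUnit_iff_isUnit_det B).mp hu)]
  calc (hA.eigenvalues i + α) * ⟪hA.eigenvectorBasis i, mulVecE B⁻¹ r⟫
      = ⟪B.toEuclideanLin (hA.eigenvectorBasis i), mulVecE B⁻¹ r⟫ := by
        rw [hBb, real_inner_smul_left]
    _ = ⟪hA.eigenvectorBasis i, r⟫ := by rw [hB, hBw]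

theorem norm_mulVecE_inv_sq (hA : A.IsHermitian) (hu : IsUnit (A + α • 1))
    (r : EuclideanSpace ℝ (Fin N)) :
    ‖mulVecE (A + α • 1)⁻¹ r‖ ^ 2 =
      ∑ i, (⟪hA.eigenvectorBasis i, r⟫ / (hA.eigenvalues i + α)) ^ 2 := by
  rw [← hA.eigenvectorBasis.sum_sq_inner_right]
  refine Finset.sum_congr rfl fun i _ => congrArg (· ^ 2) ?_
  have hne : hA.eigenvalues i + α ≠ 0 := by
    -- for `r = bᵢ` the identity above reads `(λᵢ + α) * 1 = 1`
    intro h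
    simpa [h] using hA.eigenvalues_add_mul_inner_mulVecE_inv hu (hA.eigenvectorBasis i) i
  rw [eq_div_iff hne, mul_comm, hA.eigenvalues_add_mul_inner_mulVecE_inv hu]

end Matrix.IsHermitian

/-- For an invertible matrix `C`, a nonzero vector `r` and `0 < q < 1`, there is a
unique `α > 0` with `α‖(CCᵀ + αI)⁻¹r‖ = q‖r‖`. -/
theorem stmt12 {N : ℕ} (C : Matrix (Fin N) (Fin N) ℝ) (hC : IsUnit C)
    (r : EuclideanSpace ℝ (Fin N)) (hr : r ≠ 0)
    (q : ℝ) (hq0 : 0 < q) (hq1 : q < 1) :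
    ∃! α : ℝ, 0 < α ∧
      α * ‖mulVecE (C * Cᵀ + α • (1 : Matrix (Fin N) (Fin N) ℝ))⁻¹ r‖ = q * ‖r‖ := by
  have hpd : (C * Cᵀ).PosDef := by
    simpa using PosDef.mul_conjTranspose_self C (vecMul_injective_iff_isUnit.mpr hC)
  set b := hpd.isHermitian.eigenvectorBasis
  set lam := hpd.isHermitian.eigenvalues
  have hsq (α : ℝ) (hα : 0 ≤ α) :
      (α * ‖mulVecE (C * Cᵀ + α • (1 : Matrix (Fin N) (Fin N) ℝ))⁻¹ r‖) ^ 2 =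
        ∑ i, (α / (lam i + α)) ^ 2 * ⟪b i, r⟫ ^ 2 := by
    have hu := (hpd.add_posSemidef (PosSemidef.one.smul hα)).isUnit
    rw [mul_pow, hpd.isHermitian.norm_mulVecE_inv_sq hu, Finset.mul_sum]
    exact Finset.sum_congr rfl fun i _ => by ring
  have hqr : (q * ‖r‖) ^ 2 < ∑ i, ⟪b i, r⟫ ^ 2 := by
    rw [b.sum_sq_inner_right, mul_pow]
    exact mul_lt_of_lt_one_left (by positivity) (pow_lt_one₀ hq0.le hq1 two_ne_zero)
  refine (existsUnique_congr fun α => and_congr_right fun hα => ?_).mpr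
    (existsUnique_pos_sum_div_add_sq_eq hpd.eigenvalues_pos (by positivity) hqr)
  rw [← hsq α hα.le]
  exact (sq_eq_sq₀ (by positivity) (by positivity)).symm
end

section
/- Under the standing assumptions, fix q ∈ (2ρ, 1) and a starting vector z⁰ ∈ ℝ^s, assume C ≠ 0, and let M be a positive integer. Suppose sequences (z^n)_{n=0}^{M}, (r^n)_{n=0}^{M-1}, (α_n)_{n=0}^{M-1} satisfy, for each 0 ≤ n ≤ M−1: r^n = g^δ − K·S_μ(z^n), ‖r^n‖ > τδ, α_n > 0 with α_n‖(CCᵀ + α_n I)⁻¹ r^n‖ = q_n‖r^n‖ where τ_n = ‖r^n‖/δ and q_n = max{q, 2ρ + (1+ρ)/τ_n}, and z^{n+1} = z^n + WCᵀ(CCᵀ + α_n I)⁻¹ r^n. Then ‖x − z⁰‖² ≥ (8ρ²/(1+2ρ))·(min{1 − q, ρ/τ}/‖C‖²)·Σ_{n=0}^{M−1} ‖r^n‖². -/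
open Matrix Filter

/-!
Put `u = x − zⁿ`, `h = (CCᵀ + αₙI)⁻¹ rⁿ` and `L = CWᵀ`. Since `WᵀW = I`, `LLᵀ = CCᵀ` and the step
is `zⁿ⁺¹ = zⁿ + Lᵀh`, while `Lu = rⁿ − e` with an error `e` made of the data noise, the model
error (i) and the thresholding defect (ii), so `‖e‖ ≤ ρ‖rⁿ‖ + (1 + 2ρ)δ`. Expanding the square gives
`‖u‖² − ‖u − Lᵀh‖² ≥ 2‖h‖(αₙ‖h‖ − ‖e‖)`. The parameter rule `αₙ‖h‖ = qₙ‖rⁿ‖` with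
`qₙ ≥ 2ρ + (1 + ρ)δ/‖rⁿ‖` bounds the bracket below by `ρ(‖rⁿ‖ − δ) ≥ 4ρ²‖rⁿ‖/(1 + 2ρ)`, and
`‖rⁿ‖ ≤ (‖C‖² + αₙ)‖h‖` together with `qₙ ≤ 1 − min(1 − q, ρ/τ)` gives
`‖h‖ ≥ min(1 − q, ρ/τ)‖rⁿ‖/‖C‖²`. Each step therefore decreases `‖x − zⁿ‖²` by the constant times
`‖rⁿ‖²`, and the sum telescopes.
-/

open scoped Matrix.Norms.L2Operator
open RealInnerProductSpace

section MulVecE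

variable {l m n : ℕ}

lemma mulVecE_sub (A : Matrix (Fin m) (Fin n) ℝ) (u v : EuclideanSpace ℝ (Fin n)) :
    mulVecE A (u - v) = mulVecE A u - mulVecE A v :=
  map_sub (toEuclideanLin A) u v

lemma add_mulVecE (A B : Matrix (Fin m) (Fin n) ℝ) (v : EuclideanSpace ℝ (Fin n)) :
    mulVecE (A + B) v = mulVecE A v + mulVecE B v := by
  simp [mulVecE, add_mulVec]

lemma sub_mulVecE (A B : Matrix (Fin m) (Fin n) ℝ) (v : EuclideanSpace ℝ (Fin n)) :
    mulVecE (A - B) v = mulVecE A v - mulVecE B v := by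
  simp [mulVecE, sub_mulVec]

lemma smul_one_mulVecE (α : ℝ) (v : EuclideanSpace ℝ (Fin n)) :
    mulVecE (α • (1 : Matrix (Fin n) (Fin n) ℝ)) v = α • v := by
  ext i; simp [mulVecE, smul_mulVec]

lemma mulVecE_mulVecE (A : Matrix (Fin l) (Fin m) ℝ) (B : Matrix (Fin m) (Fin n) ℝ)
    (v : EuclideanSpace ℝ (Fin n)) : mulVecE A (mulVecE B v) = mulVecE (A * B) v := by
  simp [mulVecE, mulVec_mulVec]

lemma mulVecE_mulVecE_inv {A : Matrix (Fin n) (Fin n) ℝ} (hA : IsUnit A)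
    (v : EuclideanSpace ℝ (Fin n)) : mulVecE A (mulVecE A⁻¹ v) = v := by
  rw [mulVecE_mulVecE, mul_nonsing_inv A ((isUnit_iff_isUnit_det A).mp hA)]
  simp [mulVecE]

lemma inner_mulVecE_left (A : Matrix (Fin m) (Fin n) ℝ) (v : EuclideanSpace ℝ (Fin n))
    (w : EuclideanSpace ℝ (Fin m)) : ⟪mulVecE A v, w⟫ = ⟪v, mulVecE Aᵀ w⟫ := by
  rw [← conjTranspose_eq_transpose_of_trivial]
  change ⟪toEuclideanLin A v, w⟫ = ⟪v, toEuclideanLin Aᴴ w⟫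
  rw [toEuclideanLin_conjTranspose_eq_adjoint, LinearMap.adjoint_inner_right]

lemma norm_mulVecE_le (A : Matrix (Fin m) (Fin n) ℝ) (v : EuclideanSpace ℝ (Fin n)) :
    ‖mulVecE A v‖ ≤ specNorm A * ‖v‖ :=
  l2_opNorm_mulVec A v

lemma specNorm_transpose (A : Matrix (Fin m) (Fin n) ℝ) : specNorm Aᵀ = specNorm A := by
  rw [← conjTranspose_eq_transpose_of_trivial]
  exact l2_opNorm_conjTranspose A

end MulVecE

section Descent

variable {m n : ℕ}

lemma norm_sub_mulVecE_transpose_sq_le (L : Matrix (Fin m) (Fin n) ℝ)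
    (u : EuclideanSpace ℝ (Fin n)) {e h : EuclideanSpace ℝ (Fin m)} {α : ℝ}
    (hh : mulVecE (L * Lᵀ) h + α • h = e + mulVecE L u) :
    ‖u - mulVecE Lᵀ h‖ ^ 2 ≤ ‖u‖ ^ 2 - 2 * ‖h‖ * (α * ‖h‖ - ‖e‖) := by
  set d := mulVecE Lᵀ h
  have hud : ⟪u, d⟫ = ‖d‖ ^ 2 + α * ‖h‖ ^ 2 - ⟪e, h⟫ := by
    have hLu : mulVecE L u = mulVecE L d + α • h - e := by
      rw [mulVecE_mulVecE, hh]; abel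
    rw [← inner_mulVecE_left, hLu, inner_sub_left, inner_add_left,
      inner_mulVecE_left, real_inner_smul_left, real_inner_self_eq_norm_sq,
      real_inner_self_eq_norm_sq]
  have heh := real_inner_le_norm e h
  rw [norm_sub_sq_real, hud]
  nlinarith [sq_nonneg ‖d‖]

lemma norm_mulVecE_mul_transpose_add_smul_le (C : Matrix (Fin m) (Fin n) ℝ)
    (h : EuclideanSpace ℝ (Fin m)) {α : ℝ} (hα : 0 ≤ α) :
    ‖mulVecE (C * Cᵀ) h + α • h‖ ≤ (specNorm C ^ 2 + α) * ‖h‖ := by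
  have hCCt : ‖mulVecE (C * Cᵀ) h‖ ≤ specNorm C ^ 2 * ‖h‖ := calc
    ‖mulVecE (C * Cᵀ) h‖ = ‖mulVecE C (mulVecE Cᵀ h)‖ := by rw [mulVecE_mulVecE]
    _ ≤ specNorm C * (specNorm Cᵀ * ‖h‖) :=
      (norm_mulVecE_le C _).trans (by gcongr; exacts [norm_nonneg _, norm_mulVecE_le Cᵀ h])
    _ = specNorm C ^ 2 * ‖h‖ := by rw [specNorm_transpose]; ring
  calc ‖mulVecE (C * Cᵀ) h + α • h‖ ≤ ‖mulVecE (C * Cᵀ) h‖ + α * ‖h‖ := by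
        simpa [norm_smul, abs_of_nonneg hα] using norm_add_le (mulVecE (C * Cᵀ) h) (α • h)
    _ ≤ (specNorm C ^ 2 + α) * ‖h‖ := by linarith

end Descent

lemma norm_residual_sub_le {m n s : ℕ} {A C : Matrix (Fin m) (Fin n) ℝ}
    {W : Matrix (Fin s) (Fin n) ℝ} {ρ μ δ : ℝ} (hρ : 0 ≤ ρ)
    (hi : ∀ v, ‖mulVecE (C - A) v‖ ≤ ρ * ‖mulVecE A v‖)
    (hii : ∀ u, ‖mulVecE (C * Wᵀ) (u - soft μ u)‖ ≤ ρ * δ)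
    {x : EuclideanSpace ℝ (Fin s)} {gδ : EuclideanSpace ℝ (Fin m)}
    (hgδ : ‖gδ - mulVecE (A * Wᵀ) x‖ ≤ δ) (z : EuclideanSpace ℝ (Fin s)) :
    ‖gδ - mulVecE (A * Wᵀ) (soft μ z) - mulVecE (C * Wᵀ) (x - z)‖ ≤
      ρ * ‖gδ - mulVecE (A * Wᵀ) (soft μ z)‖ + (1 + 2 * ρ) * δ := by
  set r := gδ - mulVecE (A * Wᵀ) (soft μ z)
  set v := mulVecE Wᵀ (x - soft μ z)
  have hAv : mulVecE A v = r - (gδ - mulVecE (A * Wᵀ) x) := by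
    simp only [v, r, mulVecE_mulVecE, mulVecE_sub]; abel
  have hmodel : ‖mulVecE (C - A) v‖ ≤ ρ * (‖r‖ + δ) := calc
    ‖mulVecE (C - A) v‖ ≤ ρ * ‖r - (gδ - mulVecE (A * Wᵀ) x)‖ := hAv ▸ hi v
    _ ≤ ρ * (‖r‖ + δ) := by gcongr; exact (norm_sub_le _ _).trans (by linarith)
  have hsplit : r - mulVecE (C * Wᵀ) (x - z) =
      (gδ - mulVecE (A * Wᵀ) x) - mulVecE (C - A) v + mulVecE (C * Wᵀ) (z - soft μ z) := by
    simp only [v, r, mulVecE_mulVecE, mulVecE_sub, sub_mulVecE, Matrix.sub_mul]; abel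
  calc ‖r - mulVecE (C * Wᵀ) (x - z)‖
      ≤ ‖gδ - mulVecE (A * Wᵀ) x‖ + ‖mulVecE (C - A) v‖ + ‖mulVecE (C * Wᵀ) (z - soft μ z)‖ := by
        rw [hsplit]; exact (norm_add_le _ _).trans (by gcongr; exact norm_sub_le _ _)
    _ ≤ δ + ρ * (‖r‖ + δ) + ρ * δ := by gcongr; exact hii z
    _ = ρ * ‖r‖ + (1 + 2 * ρ) * δ := by ring

/-- The paper's `τ`. -/
noncomputable def discrepancyRatio (ρ : ℝ) : ℝ := (1 + 2 * ρ) / (1 - 2 * ρ)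

/-- The paper's `qₙ` when `‖rⁿ‖ = t`, i.e. `τₙ = t / δ`. -/
noncomputable def adaptiveQ (q ρ δ t : ℝ) : ℝ := max q (2 * ρ + (1 + ρ) / (t / δ))

noncomputable def descentConst (ρ q σ : ℝ) : ℝ :=
  8 * ρ ^ 2 / (1 + 2 * ρ) * (min (1 - q) (ρ / discrepancyRatio ρ) / σ ^ 2)

section Scalar

variable {ρ δ q t : ℝ}

lemma discrepancyRatio_pos (hρ0 : 0 < ρ) (hρ1 : ρ < 1 / 2) : 0 < discrepancyRatio ρ :=
  div_pos (by linarith) (by linarith)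

lemma two_mul_add_le_adaptiveQ_mul (ht : 0 < t) :
    2 * ρ * t + (1 + ρ) * δ ≤ adaptiveQ q ρ δ t * t := calc
  2 * ρ * t + (1 + ρ) * δ = (2 * ρ + (1 + ρ) / (t / δ)) * t := by
    rw [div_div_eq_mul_div]; field_simp
  _ ≤ adaptiveQ q ρ δ t * t := by gcongr; exact le_max_right _ _

lemma adaptiveQ_le_one_sub_min (hρ0 : 0 < ρ) (hρ1 : ρ < 1 / 2) (ht : 0 < t)
    (hτ : discrepancyRatio ρ * δ < t) :
    adaptiveQ q ρ δ t ≤ 1 - min (1 - q) (ρ / discrepancyRatio ρ) := by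
  have hτpos := discrepancyRatio_pos hρ0 hρ1
  refine max_le (by linarith [min_le_left (1 - q) (ρ / discrepancyRatio ρ)]) ?_
  have hδt : (1 + ρ) / (t / δ) ≤ (1 + ρ) / discrepancyRatio ρ := by
    rw [div_div_eq_mul_div, div_le_div_iff₀ ht hτpos]
    nlinarith
  have hτ_id : 2 * ρ + (1 + ρ) / discrepancyRatio ρ = 1 - ρ / discrepancyRatio ρ := by
    have : 1 - 2 * ρ ≠ 0 := by linarith
    have : 1 + 2 * ρ ≠ 0 := by linarith
    unfold discrepancyRatio; field_simp; ring
  linarith [min_le_right (1 - q) (ρ / discrepancyRatio ρ)]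

lemma mul_le_sub_of_discrepancyRatio_mul_lt (hρ0 : 0 < ρ) (hρ1 : ρ < 1 / 2)
    (hτ : discrepancyRatio ρ * δ < t) : 4 * ρ / (1 + 2 * ρ) * t ≤ t - δ := by
  unfold discrepancyRatio at hτ
  rw [div_mul_eq_mul_div, div_lt_iff₀ (by linarith)] at hτ
  rw [div_mul_eq_mul_div, div_le_iff₀ (by linarith)]
  nlinarith

lemma descentConst_mul_sq_le {α η ε σ : ℝ} (hρ0 : 0 < ρ) (hρ1 : ρ < 1 / 2) (hq1 : q < 1)
    (hδ : 0 < δ) (hτ : discrepancyRatio ρ * δ < t) (hη : 0 ≤ η)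
    (hαη : α * η = adaptiveQ q ρ δ t * t) (ht : t ≤ (σ ^ 2 + α) * η)
    (hε : ε ≤ ρ * t + (1 + 2 * ρ) * δ) :
    descentConst ρ q σ * t ^ 2 ≤ 2 * η * (α * η - ε) := by
  set c := min (1 - q) (ρ / discrepancyRatio ρ)
  have hτpos := discrepancyRatio_pos hρ0 hρ1
  have htpos : 0 < t := lt_trans (mul_pos hτpos hδ) hτ
  have hc : 0 ≤ c := le_min (by linarith) (div_pos hρ0 hτpos).le
  have hgain : ρ * (4 * ρ / (1 + 2 * ρ) * t) ≤ α * η - ε := calc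
    ρ * (4 * ρ / (1 + 2 * ρ) * t) ≤ ρ * (t - δ) := by
      gcongr; exact mul_le_sub_of_discrepancyRatio_mul_lt hρ0 hρ1 hτ
    _ ≤ α * η - ε := by linarith [two_mul_add_le_adaptiveQ_mul (q := q) (ρ := ρ) (δ := δ) htpos]
  have hη_ge : c / σ ^ 2 * t ≤ η := by
    rw [div_mul_eq_mul_div]
    refine div_le_of_le_mul₀ (sq_nonneg σ) hη ?_
    have := adaptiveQ_le_one_sub_min (q := q) hρ0 hρ1 htpos hτ
    nlinarith
  calc descentConst ρ q σ * t ^ 2 = 2 * (c / σ ^ 2 * t) * (ρ * (4 * ρ / (1 + 2 * ρ) * t)) := by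
        unfold descentConst; ring
    _ ≤ 2 * η * (α * η - ε) := by gcongr

end Scalar

lemma isUnit_mul_transpose_add_smul_one {m n : ℕ} (C : Matrix (Fin m) (Fin n) ℝ) {α : ℝ}
    (hα : 0 < α) : IsUnit (C * Cᵀ + α • (1 : Matrix (Fin m) (Fin m) ℝ)) := by
  have hCCt : (C * Cᵀ).PosSemidef := by
    simpa using posSemidef_self_mul_conjTranspose C
  exact (PosDef.posSemidef_add hCCt (PosDef.one.smul hα)).isUnit

theorem descentConst_mul_norm_sq_le {m n s : ℕ} {A C : Matrix (Fin m) (Fin n) ℝ}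
    {W : Matrix (Fin s) (Fin n) ℝ} (hW : Wᵀ * W = 1) {ρ μ δ q : ℝ} (hρ0 : 0 < ρ)
    (hρ1 : ρ < 1 / 2) (hδ : 0 < δ) (hq1 : q < 1)
    (hi : ∀ v, ‖mulVecE (C - A) v‖ ≤ ρ * ‖mulVecE A v‖)
    (hii : ∀ u, ‖mulVecE (C * Wᵀ) (u - soft μ u)‖ ≤ ρ * δ)
    {x : EuclideanSpace ℝ (Fin s)} {gδ : EuclideanSpace ℝ (Fin m)}
    (hgδ : ‖gδ - mulVecE (A * Wᵀ) x‖ ≤ δ) {z : EuclideanSpace ℝ (Fin s)}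
    {r : EuclideanSpace ℝ (Fin m)} {α : ℝ} (hr : r = gδ - mulVecE (A * Wᵀ) (soft μ z))
    (hτ : discrepancyRatio ρ * δ < ‖r‖) (hα : 0 < α)
    (hαeq : α * ‖mulVecE (C * Cᵀ + α • (1 : Matrix (Fin m) (Fin m) ℝ))⁻¹ r‖ =
      adaptiveQ q ρ δ ‖r‖ * ‖r‖) :
    descentConst ρ q (specNorm C) * ‖r‖ ^ 2 ≤ ‖x - z‖ ^ 2 -
      ‖x - (z + mulVecE (W * Cᵀ * (C * Cᵀ + α • (1 : Matrix (Fin m) (Fin m) ℝ))⁻¹) r)‖ ^ 2 := by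
  set P := C * Cᵀ + α • (1 : Matrix (Fin m) (Fin m) ℝ)
  set h := mulVecE P⁻¹ r
  have hPh : mulVecE (C * Cᵀ) h + α • h = r := by
    rw [← smul_one_mulVecE, ← add_mulVecE]
    exact mulVecE_mulVecE_inv (isUnit_mul_transpose_add_smul_one C hα) r
  have hCW : C * Wᵀ * (C * Wᵀ)ᵀ = C * Cᵀ := by
    rw [transpose_mul, transpose_transpose, Matrix.mul_assoc, ← Matrix.mul_assoc Wᵀ, hW,
      Matrix.one_mul]
  have hstep : x - (z + mulVecE (W * Cᵀ * P⁻¹) r) = x - z - mulVecE (C * Wᵀ)ᵀ h := by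
    rw [transpose_mul, transpose_transpose, ← mulVecE_mulVecE]; abel
  have hdesc := norm_sub_mulVecE_transpose_sq_le (C * Wᵀ) (x - z)
    (e := r - mulVecE (C * Wᵀ) (x - z)) (h := h) (α := α) (by rw [hCW, hPh]; abel)
  have hnoise := norm_residual_sub_le hρ0.le hi hii hgδ z
  rw [← hr] at hnoise
  have hgrowth := norm_mulVecE_mul_transpose_add_smul_le C h hα.le
  rw [hPh] at hgrowth
  have := descentConst_mul_sq_le hρ0 hρ1 hq1 hδ hτ (norm_nonneg h) hαeq hgrowth hnoise
  rw [hstep]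
  linarith

theorem stmt13_general {N s : ℕ}
    (A C : Matrix (Fin N) (Fin N) ℝ) (W : Matrix (Fin s) (Fin N) ℝ)
    (hW : Wᵀ * W = (1 : Matrix (Fin N) (Fin N) ℝ))
    (ρ μ δ : ℝ) (hρ0 : 0 < ρ) (hρ1 : ρ < 1 / 2) (hδ : 0 < δ)
    (hi : ∀ v : EuclideanSpace ℝ (Fin N), ‖mulVecE (C - A) v‖ ≤ ρ * ‖mulVecE A v‖)
    (hii : ∀ u : EuclideanSpace ℝ (Fin s), ‖mulVecE (C * Wᵀ) (u - soft μ u)‖ ≤ ρ * δ)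
    (x : EuclideanSpace ℝ (Fin s)) (gδ : EuclideanSpace ℝ (Fin N))
    (hgδ : ‖gδ - mulVecE (A * Wᵀ) x‖ ≤ δ)
    (q : ℝ) (hq1 : q < 1)
    (M : ℕ)
    (z : ℕ → EuclideanSpace ℝ (Fin s)) (r : ℕ → EuclideanSpace ℝ (Fin N)) (αs : ℕ → ℝ)
    (hrdef : ∀ n < M, r n = gδ - mulVecE (A * Wᵀ) (soft μ (z n)))
    (hbig : ∀ n < M, ‖r n‖ > ((1 + 2 * ρ) / (1 - 2 * ρ)) * δ)
    (hαpos : ∀ n < M, 0 < αs n)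
    (hαeq : ∀ n < M,
      αs n * ‖mulVecE (C * Cᵀ + αs n • (1 : Matrix (Fin N) (Fin N) ℝ))⁻¹ (r n)‖ =
        max q (2 * ρ + (1 + ρ) / (‖r n‖ / δ)) * ‖r n‖)
    (hstep : ∀ n < M, z (n + 1) =
      z n + mulVecE (W * Cᵀ * (C * Cᵀ + αs n • (1 : Matrix (Fin N) (Fin N) ℝ))⁻¹) (r n)) :
    ‖x - z 0‖ ^ 2 ≥
      (8 * ρ ^ 2 / (1 + 2 * ρ)) *
        (min (1 - q) (ρ / ((1 + 2 * ρ) / (1 - 2 * ρ))) / specNorm C ^ 2) *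
        ∑ n ∈ Finset.range M, ‖r n‖ ^ 2 := by
  have hdecrease : ∀ n < M, descentConst ρ q (specNorm C) * ‖r n‖ ^ 2 ≤
      ‖x - z n‖ ^ 2 - ‖x - z (n + 1)‖ ^ 2 := fun n hn => hstep n hn ▸
    descentConst_mul_norm_sq_le hW hρ0 hρ1 hδ hq1 hi hii hgδ (hrdef n hn) (hbig n hn)
      (hαpos n hn) (hαeq n hn)
  calc descentConst ρ q (specNorm C) * ∑ n ∈ Finset.range M, ‖r n‖ ^ 2
      = ∑ n ∈ Finset.range M, descentConst ρ q (specNorm C) * ‖r n‖ ^ 2 := Finset.mul_sum _ _ _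
    _ ≤ ∑ n ∈ Finset.range M, (‖x - z n‖ ^ 2 - ‖x - z (n + 1)‖ ^ 2) :=
      Finset.sum_le_sum fun n hn => hdecrease n (Finset.mem_range.mp hn)
    _ = ‖x - z 0‖ ^ 2 - ‖x - z M‖ ^ 2 := Finset.sum_range_sub' _ M
    _ ≤ ‖x - z 0‖ ^ 2 := sub_le_self _ (sq_nonneg _)

/-- Corollary 1 of the paper (second inequality): the sum of squared residual norms
is controlled by `‖x − z⁰‖²`, with explicit constant
`(8ρ²/(1+2ρ))·(min{1 − q, ρ/τ}/‖C‖²)`. -/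
theorem stmt13 {N s : ℕ} (hN : 0 < N) (hs : 0 < s) (hNs : N ≤ s)
    (A C : Matrix (Fin N) (Fin N) ℝ) (hC : C ≠ 0) (W : Matrix (Fin s) (Fin N) ℝ)
    (hW : Wᵀ * W = (1 : Matrix (Fin N) (Fin N) ℝ))
    (ρ μ δ : ℝ) (hρ0 : 0 < ρ) (hρ1 : ρ < 1 / 2) (hμ : 0 ≤ μ) (hδ : 0 < δ)
    (hi : ∀ v : EuclideanSpace ℝ (Fin N), ‖mulVecE (C - A) v‖ ≤ ρ * ‖mulVecE A v‖)
    (hii : ∀ u : EuclideanSpace ℝ (Fin s), ‖mulVecE (C * Wᵀ) (u - soft μ u)‖ ≤ ρ * δ)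
    (x : EuclideanSpace ℝ (Fin s)) (gδ : EuclideanSpace ℝ (Fin N))
    (hgδ : ‖gδ - mulVecE (A * Wᵀ) x‖ ≤ δ)
    (q : ℝ) (hq0 : 2 * ρ < q) (hq1 : q < 1)
    (M : ℕ) (hM : 0 < M)
    (z : ℕ → EuclideanSpace ℝ (Fin s)) (r : ℕ → EuclideanSpace ℝ (Fin N)) (αs : ℕ → ℝ)
    (hrdef : ∀ n < M, r n = gδ - mulVecE (A * Wᵀ) (soft μ (z n)))
    (hbig : ∀ n < M, ‖r n‖ > ((1 + 2 * ρ) / (1 - 2 * ρ)) * δ)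
    (hαpos : ∀ n < M, 0 < αs n)
    (hαeq : ∀ n < M,
      αs n * ‖mulVecE (C * Cᵀ + αs n • (1 : Matrix (Fin N) (Fin N) ℝ))⁻¹ (r n)‖ =
        max q (2 * ρ + (1 + ρ) / (‖r n‖ / δ)) * ‖r n‖)
    (hstep : ∀ n < M, z (n + 1) =
      z n + mulVecE (W * Cᵀ * (C * Cᵀ + αs n • (1 : Matrix (Fin N) (Fin N) ℝ))⁻¹) (r n)) :
    ‖x - z 0‖ ^ 2 ≥
      (8 * ρ ^ 2 / (1 + 2 * ρ)) *
        (min (1 - q) (ρ / ((1 + 2 * ρ) / (1 - 2 * ρ))) / specNorm C ^ 2) *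
        ∑ n ∈ Finset.range M, ‖r n‖ ^ 2 :=
  stmt13_general A C W hW ρ μ δ hρ0 hρ1 hδ hi hii x gδ hgδ q hq1 M z r αs hrdef hbig hαpos hαeq
    hstep
end
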